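/- arXiv:2004.02367 — 15 statements merged into one kernel-verified Lean document; each statement's English description precedes it below -/
import Mathlib

section
/- Let h ≥ 2 and let s, t be integers with gcd(h, s−t) = 1. Let A = {s} ∪ {hz + t : z ∈ ℤ}. Then hA = ℤ, i.e., A is a basis of order h for ℤ. -/
def sumset (h : ℕ) (A : Set ℤ) : Set ℤ :=
  {n | ∃ f : Fin h → ℤ, (∀ i, f i ∈ A) ∧ n = ∑ i, f i}

def InfiniteGaps (Y : Set ℤ) : Prop :=
  ∀ C : ℤ, 0 < C →
    {p : ℤ × ℤ | p.1 ∈ Y ∧ p.2 ∈ Y ∧ p.1 ≠ p.2 ∧ |p.1 - p.2| ≤ C}.Finite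

theorem stmt1 (h : ℕ) (hh : 2 ≤ h) (s t : ℤ)
    (hgcd : Int.gcd (h : ℤ) (s - t) = 1)
    (A : Set ℤ) (hA : A = {s} ∪ {m : ℤ | ∃ z : ℤ, m = (h : ℤ) * z + t}) :
    sumset h A = Set.univ := by
  have hp : (0:ℤ) < (h:ℤ) := by exact_mod_cast Nat.lt_of_lt_of_le Nat.zero_lt_two hh
  ext n
  simp only [sumset, Set.mem_setOf_eq, Set.mem_univ, iff_true]
  -- Bezout
  obtain ⟨x, y, hxy⟩ : ∃ x y : ℤ, (h:ℤ) * x + (s - t) * y = 1 := by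
    refine ⟨Int.gcdA (h:ℤ) (s-t), Int.gcdB (h:ℤ) (s-t), ?_⟩
    have := Int.gcd_eq_gcd_ab (h:ℤ) (s-t)
    rw [hgcd] at this
    push_cast at this
    linarith
  set K : ℤ := y * (n - (h:ℤ) * t) with hKdef
  set k : ℕ := (K % (h:ℤ)).toNat with hkdef
  have hk1 : (k:ℤ) = K % (h:ℤ) := Int.toNat_of_nonneg (Int.emod_nonneg _ (ne_of_gt hp))
  have hklt : k < h := by
    have := Int.emod_lt_of_pos K hp
    omega
  have hkK : (k:ℤ) = K - (h:ℤ) * (K / (h:ℤ)) := by rw [hk1, Int.emod_def]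
  have hdvd : (h:ℤ) ∣ n - (h:ℤ)*t - (k:ℤ)*(s-t) := by
    refine ⟨x*(n - (h:ℤ)*t) + (K/(h:ℤ))*(s - t), ?_⟩
    have hK : K = y * (n - (h:ℤ) * t) := hKdef
    linear_combination -(n - (h:ℤ)*t) * hxy - (s - t) * hkK - (s-t) * hK
  obtain ⟨Z, hZ⟩ := hdvd
  refine ⟨fun i => if (i:ℕ) < k then s else if (i:ℕ) = h - 1 then (h:ℤ)*Z + t else t, ?_, ?_⟩
  · intro i
    subst hA
    dsimp only
    by_cases h1 : (i:ℕ) < k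
    · simp [h1]
    · by_cases h2 : (i:ℕ) = h - 1
      · rw [if_neg h1, if_pos h2]
        right; exact ⟨Z, rfl⟩
      · rw [if_neg h1, if_neg h2]
        right; exact ⟨0, by ring⟩
  · have hsplit : ∀ i : Fin h,
        (if (i:ℕ) < k then s else if (i:ℕ) = h - 1 then (h:ℤ)*Z + t else t)
          = (if (i:ℕ) < k then s else t) + (if (i:ℕ) = h - 1 then (h:ℤ)*Z else 0) := by
      intro i
      by_cases h1 : (i:ℕ) < k
      · have : (i:ℕ) ≠ h - 1 := by omega
        simp [h1, this]
      · by_cases h2 : (i:ℕ) = h - 1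
        · have h3 : ¬ (h - 1 < k) := by omega
          simp [h1, h2, h3, add_comm]
        · simp [h1, h2]
    rw [Finset.sum_congr rfl (fun i _ => hsplit i), Finset.sum_add_distrib]
    rw [Fin.sum_univ_eq_sum_range (fun i => if i < k then s else t) h,
        Fin.sum_univ_eq_sum_range (fun i => if i = h - 1 then (h:ℤ)*Z else 0) h]
    have e1 : ∑ i ∈ Finset.range h, (if i < k then s else t) = (k:ℤ)*s + ((h:ℤ)-(k:ℤ))*t := by
      rw [Finset.sum_ite]
      have hf1 : Finset.filter (fun i => i < k) (Finset.range h) = Finset.range k := by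
        ext i; simp; omega
      have hf2 : (Finset.filter (fun i => ¬ i < k) (Finset.range h)).card = h - k := by
        rw [Finset.filter_not, Finset.card_sdiff_of_subset]
        · rw [hf1, Finset.card_range, Finset.card_range]
        · rw [hf1]; exact Finset.range_subset_range.2 (le_of_lt hklt)
      rw [hf1, Finset.sum_const, Finset.sum_const, hf2, Finset.card_range]
      simp only [nsmul_eq_mul]
      rw [Nat.cast_sub (le_of_lt hklt)]
    have e2 : ∑ i ∈ Finset.range h, (if i = h - 1 then (h:ℤ)*Z else 0) = (h:ℤ)*Z := by
      rw [Finset.sum_ite_eq' (Finset.range h) (h-1) (fun _ => (h:ℤ)*Z)]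
      simp only [Finset.mem_range]
      rw [if_pos (by omega)]
    rw [e1, e2]
    linarith [hZ]
end

section
/- Let h ≥ 2 and let s, t be integers with gcd(h, s−t) = 1. Let A = {s} ∪ {hz + t : z ∈ ℤ}. If n ≡ t − s (mod h), then there exists a unique z₁ ∈ ℤ such that n = (h−1)s + (hz₁ + t), and this is the unique representation of n as a sum of h elements of A: in any representation n = a₁ + ⋯ + a_h with aᵢ ∈ A, exactly h−1 of the aᵢ equal s and the remaining one equals hz₁ + t. -/
lemma aux_sum_dvd (h : ℕ) (t : ℤ) (l : Multiset ℤ)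
    (hl : ∀ a ∈ l, (h : ℤ) ∣ a - t) :
    (h : ℤ) ∣ l.sum - (Multiset.card l : ℤ) * t := by
  induction l using Multiset.induction_on with
  | empty => simp
  | cons a l ih =>
    have h1 := hl a (Multiset.mem_cons_self a l)
    have h2 := ih (fun b hb => hl b (Multiset.mem_cons_of_mem hb))
    have key : (a ::ₘ l).sum - (Multiset.card (a ::ₘ l) : ℤ) * t
        = (a - t) + (l.sum - (Multiset.card l : ℤ) * t) := by
      rw [Multiset.sum_cons, Multiset.card_cons]
      push_cast
      ring
    rw [key]
    exact dvd_add h1 h2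

theorem stmt2 (h : ℕ) (hh : 2 ≤ h) (s t : ℤ)
    (hgcd : Int.gcd (h : ℤ) (s - t) = 1)
    (A : Set ℤ) (hA : A = {s} ∪ {m : ℤ | ∃ z : ℤ, m = (h : ℤ) * z + t})
    (n : ℤ) (hn : n ≡ t - s [ZMOD (h : ℤ)]) :
    ∃! z₁ : ℤ, n = ((h : ℤ) - 1) * s + ((h : ℤ) * z₁ + t) ∧
      ∀ m : Multiset ℤ, Multiset.card m = h → (∀ a ∈ m, a ∈ A) → m.sum = n →
        m = Multiset.replicate (h - 1) s + {(h : ℤ) * z₁ + t} := by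
  classical
  have hh0 : (0:ℤ) < (h:ℤ) := by exact_mod_cast Nat.lt_of_lt_of_le Nat.zero_lt_two hh
  have hcop : IsCoprime ((h:ℤ)) (s - t) := Int.isCoprime_iff_gcd_eq_one.mpr hgcd
  have hdvd : (h:ℤ) ∣ (t - s) - n := hn.dvd
  obtain ⟨d, hd⟩ := hdvd
  have hdvd1 : (h:ℤ) ∣ n - (((h:ℤ)-1)*s + t) := ⟨-d - s, by linear_combination -hd⟩
  obtain ⟨z₁, hz₁⟩ := hdvd1
  refine ⟨z₁, ⟨by linarith, ?_⟩, ?_⟩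
  · -- main part
    intro m hcard hmem hsum
    set P : ℤ → Prop := fun a => (h:ℤ) ∣ a - t with hP
    have hPs : ¬ P s := by
      intro hps
      obtain ⟨u, v, huv⟩ := hcop
      have h1 : (h:ℤ) ∣ 1 := by
        rw [← huv]
        exact dvd_add (Dvd.intro_left u rfl) (Dvd.dvd.mul_left hps v)
      have := Int.le_of_dvd one_pos h1
      omega
    have hm12 : m.filter P + m.filter (fun a => ¬ P a) = m := Multiset.filter_add_not P m
    set m₂ := m.filter P with hm2def
    set m₁ := m.filter (fun a => ¬ P a) with hm1def
    have hm1s : ∀ a ∈ m₁, a = s := by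
      intro a ha
      have hamem : a ∈ m := Multiset.mem_of_mem_filter ha
      have hnp : ¬ P a := (Multiset.mem_filter.1 ha).2
      have := hmem a hamem
      rw [hA] at this
      rcases this with h1 | ⟨z, hz⟩
      · simpa using h1
      · exact absurd ⟨z, by rw [hz]; ring⟩ hnp
    have hm2P : ∀ a ∈ m₂, (h:ℤ) ∣ a - t := fun a ha => (Multiset.mem_filter.1 ha).2
    have hm1rep : m₁ = Multiset.replicate (Multiset.card m₁) s :=
      (Multiset.eq_replicate_card).2 hm1s
    have hcards : Multiset.card m₂ + Multiset.card m₁ = h := by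
      rw [← Multiset.card_add, hm12, hcard]
    set k := Multiset.card m₂ with hk
    set c₁ := Multiset.card m₁ with hc₁
    have hkle : k ≤ h := by omega
    obtain ⟨c, hc⟩ := aux_sum_dvd h t m₂ hm2P
    have hsum' : m₂.sum + (c₁ : ℤ) * s = n := by
      have : m₂.sum + m₁.sum = n := by rw [← Multiset.sum_add, hm12, hsum]
      rwa [hm1rep, Multiset.sum_replicate, nsmul_eq_mul] at this
    have hcast : (c₁ : ℤ) = (h:ℤ) - (k:ℤ) := by
      have := hcards; push_cast [← this]; ring
    rw [← hk] at hc
    have hdk : (h:ℤ) ∣ ((k:ℤ) - 1) * (s - t) := by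
      refine ⟨d + c + s, ?_⟩
      linear_combination hd + hc - hsum' + s * hcast
    have hdk1 : (h:ℤ) ∣ ((k:ℤ) - 1) := hcop.dvd_of_dvd_mul_right hdk
    obtain ⟨e, he⟩ := hdk1
    have hk1 : k = 1 := by
      have hk0 : (0:ℤ) ≤ (k:ℤ) := Int.natCast_nonneg k
      have hkh : (k:ℤ) ≤ (h:ℤ) := by exact_mod_cast hkle
      rcases lt_trichotomy e 0 with he0 | he0 | he0
      · have : (h:ℤ) * e ≤ (h:ℤ) * (-1) := by
          apply mul_le_mul_of_nonneg_left (by omega) (le_of_lt hh0)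
        have : (k:ℤ) = 1 := by nlinarith
        exact_mod_cast this
      · have : (k:ℤ) = 1 := by rw [he0] at he; linarith
        exact_mod_cast this
      · have : (h:ℤ) * 1 ≤ (h:ℤ) * e := by
          apply mul_le_mul_of_nonneg_left (by omega) (le_of_lt hh0)
        have : (k:ℤ) = 1 := by nlinarith
        exact_mod_cast this
    obtain ⟨a, ha2⟩ := Multiset.card_eq_one.1 hk1
    have haP : (h:ℤ) ∣ a - t := hm2P a (by rw [ha2]; exact Multiset.mem_singleton_self a)
    have hc₁h : c₁ = h - 1 := by omega
    have hsum2 : m₂.sum = a := by rw [ha2]; simp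
    have hcastc : (c₁ : ℤ) = (h:ℤ) - 1 := by rw [hcast, hk1]; push_cast; ring
    have haz : a = (h:ℤ) * z₁ + t := by
      have : a + ((h:ℤ) - 1) * s = n := by rw [← hcastc, ← hsum2]; exact hsum'
      linarith [hz₁]
    rw [← hm12, hm1rep, ha2, haz, hc₁h]
    rw [add_comm]
  · -- uniqueness
    rintro z ⟨hz, -⟩
    have : (h:ℤ) * z = (h:ℤ) * z₁ := by linarith
    exact mul_left_cancel₀ (ne_of_gt hh0) this
end

section
/- Let Y ⊆ ℤ be a set such that there exist only finitely many pairs y, y' ∈ Y with y ≠ y' and |y − y'| ≤ 3. Then X = ℤ \ Y satisfies: all but finitely many integers n lie in the sumset 2X = {x + x' : x, x' ∈ X}. -/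
theorem stmt3 (Y : Set ℤ)
    (hY : {p : ℤ × ℤ | p.1 ∈ Y ∧ p.2 ∈ Y ∧ p.1 ≠ p.2 ∧ |p.1 - p.2| ≤ 3}.Finite)
    (X : Set ℤ) (hX : X = Yᶜ) :
    (sumset 2 X)ᶜ.Finite := by
  subst hX
  have key : (sumset 2 Yᶜ)ᶜ ⊆
      ⋃ p ∈ {p : ℤ × ℤ | p.1 ∈ Y ∧ p.2 ∈ Y ∧ p.1 ≠ p.2 ∧ |p.1 - p.2| ≤ 3},
        ({2 * p.1 - 1, 2 * p.1, 2 * p.1 + 1} : Set ℤ) := by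
    intro n hn
    have hmem : ∀ a b : ℤ, a + b = n → a ∈ Y ∨ b ∈ Y := by
      intro a b hab
      by_contra h
      push_neg at h
      exact hn ⟨![a, b], by
        refine ⟨?_, ?_⟩
        · intro i; fin_cases i <;> simp [h.1, h.2]
        · simp [Fin.sum_univ_two, hab.symm]⟩
    set m := n / 2 with hm
    obtain ⟨u, hu, huv⟩ : ∃ u, u ∈ Y ∧ (u = m ∨ u = n - m) := by
      rcases hmem m (n - m) (by ring) with h1 | h1
      · exact ⟨m, h1, Or.inl rfl⟩
      · exact ⟨n - m, h1, Or.inr rfl⟩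
    obtain ⟨v, hv, hvv⟩ : ∃ v, v ∈ Y ∧ (v = m + 2 ∨ v = n - m - 2) := by
      rcases hmem (m + 2) (n - m - 2) (by ring) with h1 | h1
      · exact ⟨m + 2, h1, Or.inl rfl⟩
      · exact ⟨n - m - 2, h1, Or.inr rfl⟩
    rw [Set.mem_iUnion₂]
    refine ⟨(u, v), ⟨hu, hv, by omega, abs_le.mpr ⟨by omega, by omega⟩⟩, ?_⟩
    simp only [Set.mem_insert_iff, Set.mem_singleton_iff]
    omega
  exact Set.Finite.subset
    (hY.biUnion fun p _ => (Set.finite_singleton _).insert _ |>.insert _) key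
end

section
/- Let h ≥ 2 and let Y ⊆ ℤ be a set such that there exist only finitely many pairs y, y' ∈ Y with y ≠ y' and |y − y'| ≤ 3. Then X = ℤ \ Y is an asymptotic basis of order h for ℤ: all but finitely many integers are sums of h elements of X. -/
theorem stmt4 (h : ℕ) (hh : 2 ≤ h) (Y : Set ℤ)
    (hY : {p : ℤ × ℤ | p.1 ∈ Y ∧ p.2 ∈ Y ∧ p.1 ≠ p.2 ∧ |p.1 - p.2| ≤ 3}.Finite)
    (X : Set ℤ) (hX : X = Yᶜ) :
    (sumset h X)ᶜ.Finite := by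
  subst hX
  -- Step 1: find two distinct close elements of Yᶜ
  have key : ∃ a b : ℤ, a ∉ Y ∧ b ∉ Y ∧ a ≠ b ∧ |a - b| ≤ 3 := by
    by_contra hc
    push_neg at hc
    have pair : ∀ k : ℤ, ∃ p, k ≤ p ∧ p ∈ Y ∧ p + 1 ∈ Y := by
      intro k
      by_cases h1 : k + 1 ∈ Y
      · by_cases h2 : k + 2 ∈ Y
        · exact ⟨k + 1, by omega, h1, by rwa [show k + 1 + 1 = k + 2 by ring]⟩
        · have h0 : k ∈ Y := by
            by_contra h0
            have := hc k (k + 2) h0 h2 (by omega)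
            rw [show k - (k + 2) = -2 by ring] at this
            norm_num at this
          exact ⟨k, le_refl _, h0, h1⟩
      · have h2 : k + 2 ∈ Y := by
          by_contra h2
          have := hc (k + 1) (k + 2) h1 h2 (by omega)
          rw [show k + 1 - (k + 2) = -1 by ring] at this
          norm_num at this
        have h3 : k + 3 ∈ Y := by
          by_contra h3
          have := hc (k + 1) (k + 3) h1 h3 (by omega)
          rw [show k + 1 - (k + 3) = -2 by ring] at this
          norm_num at this
        exact ⟨k + 2, by omega, h2, by rwa [show k + 2 + 1 = k + 3 by ring]⟩
    have hsub : {p : ℤ | p ∈ Y ∧ p + 1 ∈ Y} ⊆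
        Prod.fst '' {p : ℤ × ℤ | p.1 ∈ Y ∧ p.2 ∈ Y ∧ p.1 ≠ p.2 ∧ |p.1 - p.2| ≤ 3} := by
      rintro p ⟨hp1, hp2⟩
      refine ⟨(p, p + 1), ⟨hp1, hp2, by omega, ?_⟩, rfl⟩
      rw [show p - (p + 1) = -1 by ring]; norm_num
    have hbdd : BddAbove {p : ℤ | p ∈ Y ∧ p + 1 ∈ Y} :=
      ((hY.image Prod.fst).bddAbove).mono hsub
    obtain ⟨u, hu⟩ := hbdd
    obtain ⟨p, hkp, hp1, hp2⟩ := pair (u + 1)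
    have := hu (⟨hp1, hp2⟩ : p ∈ {p : ℤ | p ∈ Y ∧ p + 1 ∈ Y})
    omega
  obtain ⟨a, b, ha, hb, hab, hdist⟩ := key
  obtain ⟨h', rfl⟩ : ∃ h', h = h' + 2 := ⟨h - 2, by omega⟩
  set g : ℤ → ℤ × ℤ := fun n => (n - (h' : ℤ) * a - a, n - (h' : ℤ) * a - b) with hg
  have hinj : Set.InjOn g {n : ℤ | n - (h' : ℤ) * a - a ∈ Y ∧ n - (h' : ℤ) * a - b ∈ Y} := by
    intro n _ m _ hnm
    have : n - (h' : ℤ) * a - a = m - (h' : ℤ) * a - a := congrArg Prod.fst hnm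
    omega
  have hbadsub : {n : ℤ | n - (h' : ℤ) * a - a ∈ Y ∧ n - (h' : ℤ) * a - b ∈ Y} ⊆
      g ⁻¹' {p : ℤ × ℤ | p.1 ∈ Y ∧ p.2 ∈ Y ∧ p.1 ≠ p.2 ∧ |p.1 - p.2| ≤ 3} := by
    rintro n ⟨hn1, hn2⟩
    refine ⟨hn1, hn2, by simp only [hg]; omega, ?_⟩
    simp only [hg]
    have : n - (h' : ℤ) * a - a - (n - (h' : ℤ) * a - b) = -(a - b) := by ring
    rw [this, abs_neg]
    exact hdist
  have hbadfin : ({n : ℤ | n - (h' : ℤ) * a - a ∈ Y ∧ n - (h' : ℤ) * a - b ∈ Y}).Finite := by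
    have : (g ⁻¹' {p : ℤ × ℤ | p.1 ∈ Y ∧ p.2 ∈ Y ∧ p.1 ≠ p.2 ∧ |p.1 - p.2| ≤ 3} ∩
        {n : ℤ | n - (h' : ℤ) * a - a ∈ Y ∧ n - (h' : ℤ) * a - b ∈ Y}).Finite := by
      apply Set.Finite.of_finite_image _ (hinj.mono Set.inter_subset_right)
      exact hY.subset (by rintro p ⟨n, ⟨hn, _⟩, rfl⟩; exact hn)
    exact this.subset (fun n hn => ⟨hbadsub hn, hn⟩)
  apply hbadfin.subset
  intro n hn
  by_contra hbad
  simp only [Set.mem_setOf_eq, not_and_or] at hbad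
  apply hn
  rcases hbad with hr | hr
  · refine ⟨Fin.cases a (Fin.cases (n - (h' : ℤ) * a - a) fun _ => a), ?_, ?_⟩
    · intro i
      refine Fin.cases ha (fun j => ?_) i
      refine Fin.cases hr (fun j => ha) j
    · simp [Fin.sum_univ_succ, Finset.sum_const, Finset.card_univ, nsmul_eq_mul]
      ring
  · refine ⟨Fin.cases b (Fin.cases (n - (h' : ℤ) * a - b) fun _ => a), ?_, ?_⟩
    · intro i
      refine Fin.cases hb (fun j => ?_) i
      refine Fin.cases hr (fun j => ha) j
    · simp [Fin.sum_univ_succ, Finset.sum_const, Finset.card_univ, nsmul_eq_mul]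
      ring
end

section
/- Let h ≥ 2, let s, t ∈ ℤ with gcd(h, s−t) = 1, let Y ⊆ ℤ be infinite with infinite gaps, and let X = ℤ \ Y, A = {s} ∪ {hx + t : x ∈ X}. Then there is a finite set F ⊆ ℤ with F ∩ {(h−1)s + hy + t : y ∈ Y} = ∅ such that ℤ \ hA = F ∪ {(h−1)s + hy + t : y ∈ Y}. -/
open Finset

/-!
Modulo `h`, a summand of `hA` is `≡ s` or `≡ t`, so a sum of `j` copies of `s` and `h - j`
elements `hx + t` is `≡ t + j (s - t)`. As `h` and `s - t` are coprime, the class of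
`(h - 1) s + t` forces `j = h - 1`, i.e. a single summand `hx + t`, and then `x = y ∈ Y`, which
is impossible. Every other residue class is reached with `h - j ≥ 2` summands from `X`, and since
`Y` has infinite gaps, `X + X = ℤ`; so that whole class lies in `hA`. Hence `F = ∅` works.
-/

theorem InfiniteGaps.exists_abs_le {Y : Set ℤ} (hY : InfiniteGaps Y) {C : ℤ} (hC : 0 < C) :
    ∃ M, ∀ y ∈ Y, ∀ y' ∈ Y, y ≠ y' → |y - y'| ≤ C → |y| ≤ M := by
  obtain ⟨M, hM⟩ := ((hY C hC).image fun p => |p.1|).bddAbove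
  exact ⟨M, fun y hy y' hy' hne hle => hM ⟨(y, y'), ⟨hy, hy', hne, hle⟩, rfl⟩⟩

theorem InfiniteGaps.exists_add_eq {Y : Set ℤ} (hY : InfiniteGaps Y) (N : ℤ) :
    ∃ a ∉ Y, ∃ b ∉ Y, a + b = N := by
  classical
  obtain ⟨M, hM⟩ := hY.exists_abs_le two_pos
  by_contra! hcover
  have side : ∀ k, k ∈ Y ∨ N - k ∈ Y := fun k => by
    by_contra! hk
    exact hcover k hk.1 (N - k) hk.2 (by ring)
  obtain ⟨k, hk⟩ : ∃ k, k = M + |N| + 1 := ⟨_, rfl⟩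
  -- Two of `k, k + 1, k + 2` fall in the same case of `side`: two close points of `Y` beyond `±M`.
  obtain ⟨i, j, hij, hsame⟩ := Fintype.exists_ne_map_eq_of_card_lt
    (fun i : Fin 3 => decide (k + (i : ℕ) ∈ Y)) (by simp)
  have hij' : (i : ℕ) ≠ j := Fin.val_ne_of_ne hij
  have := i.isLt
  have := j.isLt
  have := le_abs_self N
  have := neg_abs_le N
  by_cases hiY : k + (i : ℕ) ∈ Y
  · have hjY : k + (j : ℕ) ∈ Y := by simpa [hiY] using hsame.symm
    have := abs_le.mp (hM _ hiY _ hjY (by omega) (abs_le.mpr ⟨by omega, by omega⟩))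
    omega
  · have hjY : k + (j : ℕ) ∉ Y := by simpa [hiY] using hsame.symm
    have := abs_le.mp (hM _ ((side _).resolve_left hiY) _ ((side _).resolve_left hjY)
      (by omega) (abs_le.mpr ⟨by omega, by omega⟩))
    omega

theorem exists_fin_sum_eq_of_forall_add_eq {G : Type*} [AddCommGroup G] {X : Set G}
    (hX : ∀ N, ∃ a ∈ X, ∃ b ∈ X, a + b = N) {k : ℕ} (hk : 2 ≤ k) (N : G) :
    ∃ g : Fin k → G, (∀ i, g i ∈ X) ∧ ∑ i, g i = N := by
  obtain ⟨m, rfl⟩ := Nat.exists_eq_add_of_le' hk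
  obtain ⟨x₀, hx₀, -⟩ := hX 0
  obtain ⟨a, ha, b, hb, hab⟩ := hX (N - m • x₀)
  refine ⟨Fin.cons a (Fin.cons b fun _ => x₀),
    fun i => Fin.cases ha (Fin.cases hb fun _ => hx₀) i, ?_⟩
  simp only [Fin.sum_cons, sum_const, card_univ, Fintype.card_fin]
  rw [← add_assoc, hab, sub_add_cancel]

theorem IsCoprime.exists_dvd_sub_mul {h c : ℤ} (hcop : IsCoprime h c) (hh : 0 < h) (a : ℤ) :
    ∃ j, 0 ≤ j ∧ j < h ∧ h ∣ a - j * c := by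
  obtain ⟨u, v, huv⟩ := hcop
  refine ⟨a * v % h, Int.emod_nonneg _ hh.ne', Int.emod_lt_of_pos _ hh, a * u + a * v / h * c, ?_⟩
  linear_combination -a * huv - c * Int.mul_ediv_add_emod (a * v) h

theorem eq_sub_one_of_add_mul_eq {h j S y s t : ℤ} (hh : 2 ≤ h) (hcop : IsCoprime h (s - t))
    (hj0 : 0 ≤ j) (hjh : j ≤ h) (heq : j * s + h * S + (h - j) * t = (h - 1) * s + h * y + t) :
    j = h - 1 ∧ S = y := by
  have hdvd : h ∣ h - 1 - j := hcop.dvd_of_dvd_mul_right ⟨S - y, by linear_combination -heq⟩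
  have hj : h - 1 - j = 0 := Int.eq_zero_of_abs_lt_dvd hdvd (abs_lt.mpr ⟨by omega, by omega⟩)
  refine ⟨by omega, ?_⟩
  have : h * (S - y) = 0 := by linear_combination heq + (s - t) * hj
  linarith [(mul_eq_zero.mp this).resolve_left (by omega)]

def insertAffine (h : ℕ) (s t : ℤ) (X : Set ℤ) : Set ℤ :=
  {s} ∪ {m : ℤ | ∃ x ∈ X, m = (h : ℤ) * x + t}

section
variable {h : ℕ} {s t : ℤ} {X : Set ℤ}

theorem add_mul_mem_sumset_insertAffine {j k : ℕ} (hjk : j + k = h) {g : Fin k → ℤ}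
    (hg : ∀ i, g i ∈ X) : j * s + h * ∑ i, g i + k * t ∈ sumset h (insertAffine h s t X) := by
  subst hjk
  refine ⟨Fin.append (fun _ => s) (fun i => ((j + k : ℕ) : ℤ) * g i + t), fun i => ?_, ?_⟩
  · refine Fin.addCases (fun i => ?_) (fun i => ?_) i
    · rw [Fin.append_left]; exact Or.inl rfl
    · rw [Fin.append_right]; exact Or.inr ⟨g i, hg i, rfl⟩
  · simp only [Fin.sum_univ_add, Fin.append_left, Fin.append_right, sum_const, card_univ,
      Fintype.card_fin, nsmul_eq_mul, sum_add_distrib, ← mul_sum]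
    ring

theorem exists_eq_of_mem_sumset_insertAffine {m : ℤ} (hm : m ∈ sumset h (insertAffine h s t X)) :
    ∃ J : Finset (Fin h), ∃ x : Fin h → ℤ, (∀ i ∉ J, x i ∈ X) ∧
      m = #J * s + h * ∑ i ∈ Jᶜ, x i + #Jᶜ * t := by
  classical
  obtain ⟨f, hf, rfl⟩ := hm
  choose! x hx using fun i (hi : f i ≠ s) => (hf i).resolve_left hi
  refine ⟨univ.filter (f · = s), x, fun i hi => (hx i (by simpa using hi)).1, ?_⟩
  rw [← sum_add_sum_compl (univ.filter (f · = s)),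
    sum_congr rfl fun i hi => (mem_filter.mp hi).2,
    sum_congr rfl fun i hi => (hx i (by simpa using hi)).2]
  simp only [sum_const, nsmul_eq_mul, sum_add_distrib, ← mul_sum]
  ring

theorem notMem_sumset_insertAffine (hh : 2 ≤ h) (hcop : IsCoprime (h : ℤ) (s - t)) {y : ℤ}
    (hy : y ∉ X) : (h - 1) * s + h * y + t ∉ sumset h (insertAffine h s t X) := by
  intro hm
  obtain ⟨J, x, hxX, hm⟩ := exists_eq_of_mem_sumset_insertAffine hm
  have hJ : #J ≤ h := by simpa using card_le_univ J
  have hcard : (#Jᶜ : ℤ) = h - #J := by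
    rw [card_compl, Fintype.card_fin, Nat.cast_sub hJ]
  obtain ⟨hJh, hxy⟩ := eq_sub_one_of_add_mul_eq (by exact_mod_cast hh) hcop (Nat.cast_nonneg _)
    (by exact_mod_cast hJ) (hcard ▸ hm.symm)
  obtain ⟨i, hi⟩ := card_eq_one.mp (show #Jᶜ = 1 by omega)
  rw [hi, sum_singleton] at hxy
  have hiJ : i ∈ Jᶜ := hi ▸ mem_singleton_self i
  exact hy (hxy ▸ hxX i (mem_compl.mp hiJ))

theorem mem_sumset_insertAffine (hh : 2 ≤ h) (hcop : IsCoprime (h : ℤ) (s - t))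
    (hX : ∀ N, ∃ a ∈ X, ∃ b ∈ X, a + b = N) {m : ℤ}
    (hm : ∀ y ∉ X, m ≠ (h - 1) * s + h * y + t) : m ∈ sumset h (insertAffine h s t X) := by
  -- `j` is the number of copies of `s` that puts the sum in the residue class of `m` mod `h`.
  obtain ⟨j, hj0, hjh, S, hS⟩ := hcop.exists_dvd_sub_mul (by omega) (m - h * t)
  lift j to ℕ using hj0
  have hm' : m = j * s + h * S + (h - j : ℕ) * t := by
    rw [Nat.cast_sub (by omega)]
    linear_combination hS
  obtain ⟨g, hg, rfl⟩ : ∃ g : Fin (h - j) → ℤ, (∀ i, g i ∈ X) ∧ ∑ i, g i = S := by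
    rcases (show h - j = 1 ∨ 2 ≤ h - j by omega) with hk | hk
    · rw [hk]
      refine ⟨fun _ => S, fun _ => ?_, by simp⟩
      by_contra hSX
      refine hm S hSX (hm'.trans ?_)
      rw [hk, show (j : ℤ) = h - 1 by omega]
      ring
    · exact exists_fin_sum_eq_of_forall_add_eq hX hk S
  exact hm' ▸ add_mul_mem_sumset_insertAffine (by omega) hg

theorem compl_sumset_insertAffine_compl (hh : 2 ≤ h) (hcop : IsCoprime (h : ℤ) (s - t))
    {Y : Set ℤ} (hY : InfiniteGaps Y) :
    (sumset h (insertAffine h s t Yᶜ))ᶜ = {m | ∃ y ∈ Y, m = (h - 1) * s + h * y + t} := by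
  ext m
  constructor
  · intro hm
    by_contra hne
    exact hm (mem_sumset_insertAffine hh hcop (by simpa using hY.exists_add_eq)
      fun y hy hmy => hne ⟨y, Set.notMem_compl_iff.mp hy, hmy⟩)
  · rintro ⟨y, hy, rfl⟩
    exact notMem_sumset_insertAffine hh hcop (Set.notMem_compl_iff.mpr hy)

end

theorem stmt6_general (h : ℕ) (hh : 2 ≤ h) (s t : ℤ)
    (hgcd : Int.gcd (h : ℤ) (s - t) = 1)
    (Y : Set ℤ) (hYgaps : InfiniteGaps Y)
    (X : Set ℤ) (hX : X = Yᶜ)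
    (A : Set ℤ) (hA : A = {s} ∪ {m : ℤ | ∃ x ∈ X, m = (h : ℤ) * x + t}) :
    ∃ F : Set ℤ, F.Finite ∧
      F ∩ {m : ℤ | ∃ y ∈ Y, m = ((h : ℤ) - 1) * s + (h : ℤ) * y + t} = ∅ ∧
      (sumset h A)ᶜ = F ∪ {m : ℤ | ∃ y ∈ Y, m = ((h : ℤ) - 1) * s + (h : ℤ) * y + t} := by
  subst hX hA
  refine ⟨∅, Set.finite_empty, Set.empty_inter _, ?_⟩
  rw [Set.empty_union]
  exact compl_sumset_insertAffine_compl hh (Int.isCoprime_iff_gcd_eq_one.mpr hgcd) hYgaps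

theorem stmt6 (h : ℕ) (hh : 2 ≤ h) (s t : ℤ)
    (hgcd : Int.gcd (h : ℤ) (s - t) = 1)
    (Y : Set ℤ) (hYinf : Y.Infinite) (hYgaps : InfiniteGaps Y)
    (X : Set ℤ) (hX : X = Yᶜ)
    (A : Set ℤ) (hA : A = {s} ∪ {m : ℤ | ∃ x ∈ X, m = (h : ℤ) * x + t}) :
    ∃ F : Set ℤ, F.Finite ∧
      F ∩ {m : ℤ | ∃ y ∈ Y, m = ((h : ℤ) - 1) * s + (h : ℤ) * y + t} = ∅ ∧
      (sumset h A)ᶜ = F ∪ {m : ℤ | ∃ y ∈ Y, m = ((h : ℤ) - 1) * s + (h : ℤ) * y + t} :=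
  stmt6_general h hh s t hgcd Y hYgaps X hX A hA
end

section
/- Let h ≥ 2, let s, t ∈ ℤ with gcd(h, s−t) = 1, let Y ⊆ ℤ be infinite with infinite gaps, and let X = ℤ \ Y, A = {s} ∪ {hx + t : x ∈ X}. Then A is an asymptotic nonbasis of order h for ℤ: ℤ \ hA is infinite. -/
theorem stmt7 (h : ℕ) (hh : 2 ≤ h) (s t : ℤ)
    (hgcd : Int.gcd (h : ℤ) (s - t) = 1)
    (Y : Set ℤ) (hYinf : Y.Infinite) (hYgaps : InfiniteGaps Y)
    (X : Set ℤ) (hX : X = Yᶜ)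
    (A : Set ℤ) (hA : A = {s} ∪ {m : ℤ | ∃ x ∈ X, m = (h : ℤ) * x + t}) :
    (sumset h A)ᶜ.Infinite := by
  classical
  subst hX hA
  have hh0 : (h : ℤ) ≠ 0 := by positivity
  -- the map y ↦ (h-1)s + t + h y sends Y into the complement of the sumset
  have hmap : ∀ y ∈ Y,
      ((h : ℤ) - 1) * s + t + (h : ℤ) * y ∉
        sumset h ({s} ∪ {m : ℤ | ∃ x ∈ Yᶜ, m = (h : ℤ) * x + t}) := by
    rintro y hy ⟨f, hf, hsum⟩
    set S : Finset (Fin h) := Finset.univ.filter (fun i => f i = s) with hS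
    have hx' : ∀ i : Fin h, ∃ x : ℤ, i ∉ S → x ∈ Yᶜ ∧ f i = (h : ℤ) * x + t := by
      intro i
      by_cases hi : i ∈ S
      · exact ⟨0, fun h' => absurd hi h'⟩
      · rcases hf i with h1 | ⟨x, hxX, hfx⟩
        · exact absurd (by simp [hS, Set.mem_singleton_iff.mp h1]) hi
        · exact ⟨x, fun _ => ⟨hxX, hfx⟩⟩
    choose x hx using hx'
    have hsplit : (∑ i, f i) = ∑ i ∈ S, f i + ∑ i ∈ Sᶜ, f i :=
      (Finset.sum_add_sum_compl S f).symm
    have hS1 : ∑ i ∈ S, f i = (S.card : ℤ) * s := by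
      rw [Finset.sum_congr rfl (fun i hi => by
        simp [hS] at hi; exact hi)]
      simp [mul_comm]
    have hS2 : ∑ i ∈ Sᶜ, f i = (h : ℤ) * (∑ i ∈ Sᶜ, x i) + (Sᶜ.card : ℤ) * t := by
      rw [Finset.sum_congr rfl (fun i hi => (hx i (Finset.mem_compl.mp hi)).2)]
      rw [Finset.sum_add_distrib, Finset.mul_sum]
      simp [mul_comm]
    set k := S.card with hk
    have hcard : S.card + Sᶜ.card = h := by
      simpa using Finset.card_add_card_compl S
    have hck : (Sᶜ.card : ℤ) = (h : ℤ) - k := by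
      have := hcard
      push_cast [← this]
      ring
    set M := ∑ i ∈ Sᶜ, x i with hM
    have key : ((h : ℤ) - 1 - k) * (s - t) = (h : ℤ) * (M - y) := by
      have := hsum
      rw [hsplit, hS1, hS2, hck] at this
      linarith [this]
    have hdvd : (h : ℤ) ∣ ((h : ℤ) - 1 - k) * (s - t) := ⟨M - y, key⟩
    have hcop : IsCoprime (h : ℤ) (s - t) := Int.isCoprime_iff_gcd_eq_one.mpr hgcd
    have hdvd2 : (h : ℤ) ∣ ((h : ℤ) - 1 - k) := hcop.dvd_of_dvd_mul_right hdvd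
    have hkle : k ≤ h := by
      have := hcard; omega
    have hzero : (h : ℤ) - 1 - k = 0 := by
      rcases hdvd2 with ⟨c, hc⟩
      have hkleZ : (k : ℤ) ≤ h := by exact_mod_cast hkle
      have hhZ : (2 : ℤ) ≤ h := by exact_mod_cast hh
      have hk0 : (0 : ℤ) ≤ k := Int.natCast_nonneg k
      -- -1 ≤ h - 1 - k ≤ h - 1, and h ∣ it
      rcases lt_trichotomy c 0 with hc0 | hc0 | hc0
      · nlinarith
      · simp [hc0] at hc; linarith [hc]
      · nlinarith
    have hkeq : (k : ℤ) = (h : ℤ) - 1 := by linarith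
    have hMy : M = y := by
      have : (h : ℤ) * (M - y) = 0 := by rw [← key, hzero, zero_mul]
      have := mul_eq_zero.mp this
      rcases this with h' | h'
      · exact absurd h' hh0
      · linarith
    have hc1 : Sᶜ.card = 1 := by
      have : (k : ℤ) + Sᶜ.card = h := by exact_mod_cast hcard
      omega
    rcases Finset.card_eq_one.mp hc1 with ⟨a, ha⟩
    have haS : a ∉ S := by
      have : a ∈ Sᶜ := by rw [ha]; exact Finset.mem_singleton_self a
      exact Finset.mem_compl.mp this
    have hMa : M = x a := by rw [hM, ha, Finset.sum_singleton]
    have : y ∈ Yᶜ := by rw [← hMy, hMa]; exact (hx a haS).1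
    exact this hy
  have hinj : Set.InjOn (fun y => ((h : ℤ) - 1) * s + t + (h : ℤ) * y) Y := by
    intro a _ b _ hab
    simp only at hab
    have : (h : ℤ) * a = (h : ℤ) * b := by linarith
    exact mul_left_cancel₀ hh0 this
  have himg := hYinf.image hinj
  refine himg.mono ?_
  rintro _ ⟨y, hy, rfl⟩
  exact hmap y hy
end

section
/- Let h ≥ 2, let s, t ∈ ℤ with gcd(h, s−t) = 1, let Y ⊆ ℤ be infinite with infinite gaps, X = ℤ \ Y, and A = {s} ∪ {hx + t : x ∈ X}. If b ∈ ℤ \ A and b ≢ s (mod h) and b ≢ t (mod h), then A ∪ {b} is an asymptotic basis of order h for ℤ. -/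
lemma sumset_add {A : Set ℤ} {j k : ℕ} {n₁ n₂ : ℤ}
    (h₁ : n₁ ∈ sumset j A) (h₂ : n₂ ∈ sumset k A) : n₁ + n₂ ∈ sumset (j + k) A := by
  obtain ⟨f, hf, rfl⟩ := h₁
  obtain ⟨g, hg, rfl⟩ := h₂
  refine ⟨Fin.append f g, ?_, ?_⟩
  · intro i
    refine Fin.addCases (fun i => ?_) (fun i => ?_) i
    · simpa using hf i
    · simpa using hg i
  · rw [Fin.sum_univ_add]
    simp

lemma sumset_const {A : Set ℤ} {a : ℤ} (ha : a ∈ A) (j : ℕ) :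
    (j : ℤ) * a ∈ sumset j A :=
  ⟨fun _ => a, fun _ => ha, by simp [mul_comm]⟩

lemma sumset_one {A : Set ℤ} {a : ℤ} (ha : a ∈ A) : a ∈ sumset 1 A :=
  ⟨fun _ => a, fun _ => ha, by simp⟩

lemma exists_two {Y : Set ℤ} (hYgaps : InfiniteGaps Y) (n : ℤ) :
    ∃ x₁ x₂ : ℤ, x₁ ∉ Y ∧ x₂ ∉ Y ∧ n = x₁ + x₂ := by
  obtain ⟨M, hM0, hM⟩ : ∃ M : ℤ, 0 ≤ M ∧
      ∀ y ∈ Y, ∀ y' ∈ Y, y ≠ y' → |y - y'| ≤ 3 → |y| ≤ M := by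
    have hfin := hYgaps 3 (by norm_num)
    obtain ⟨M, hM⟩ := (hfin.image (fun p => |p.1|)).bddAbove
    refine ⟨|M|, abs_nonneg _, fun y hy y' hy' hne habs => ?_⟩
    exact le_trans (hM ⟨(y, y'), ⟨hy, hy', hne, habs⟩, rfl⟩) (le_abs_self M)
  obtain ⟨N, hN0, hN⟩ : ∃ N : ℤ, 0 ≤ N ∧ n ≤ N := ⟨|n|, abs_nonneg n, le_abs_self n⟩
  set R : ℤ := M + N + 1 with hR
  have hP : ∀ i j : ℤ, 0 ≤ i → i ≤ 2 → 0 ≤ j → j ≤ 2 → i ≠ j →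
      R + i ∈ Y → R + j ∈ Y → False := by
    intro i j hi hi2 hj hj2 hne hyi hyj
    have h1 : |R + i - (R + j)| ≤ 3 := by rw [abs_le]; omega
    have h2 := hM _ hyi _ hyj (by omega) h1
    rw [abs_le] at h2
    omega
  have hQ : ∀ i j : ℤ, 0 ≤ i → i ≤ 2 → 0 ≤ j → j ≤ 2 → i ≠ j →
      n - (R + i) ∈ Y → n - (R + j) ∈ Y → False := by
    intro i j hi hi2 hj hj2 hne hyi hyj
    have h1 : |n - (R + i) - (n - (R + j))| ≤ 3 := by rw [abs_le]; omega
    have h2 := hM _ hyi _ hyj (by omega) h1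
    rw [abs_le] at h2
    omega
  have key : ∃ x, x ∉ Y ∧ n - x ∉ Y := by
    by_contra hc
    push_neg at hc
    have D : ∀ i : ℤ, (R + i ∈ Y) ∨ (n - (R + i) ∈ Y) := by
      intro i
      by_cases hx : R + i ∈ Y
      · exact Or.inl hx
      · exact Or.inr (hc _ hx)
    rcases D 0 with p0 | q0 <;> rcases D 1 with p1 | q1 <;> rcases D 2 with p2 | q2
    · exact hP 0 1 (by norm_num) (by norm_num) (by norm_num) (by norm_num) (by norm_num) p0 p1
    · exact hP 0 1 (by norm_num) (by norm_num) (by norm_num) (by norm_num) (by norm_num) p0 p1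
    · exact hP 0 2 (by norm_num) (by norm_num) (by norm_num) (by norm_num) (by norm_num) p0 p2
    · exact hQ 1 2 (by norm_num) (by norm_num) (by norm_num) (by norm_num) (by norm_num) q1 q2
    · exact hP 1 2 (by norm_num) (by norm_num) (by norm_num) (by norm_num) (by norm_num) p1 p2
    · exact hQ 0 2 (by norm_num) (by norm_num) (by norm_num) (by norm_num) (by norm_num) q0 q2
    · exact hQ 0 1 (by norm_num) (by norm_num) (by norm_num) (by norm_num) (by norm_num) q0 q1
    · exact hQ 0 1 (by norm_num) (by norm_num) (by norm_num) (by norm_num) (by norm_num) q0 q1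
  obtain ⟨x, hx1, hx2⟩ := key
  exact ⟨x, n - x, hx1, hx2, by ring⟩

theorem stmt8 (h : ℕ) (hh : 2 ≤ h) (s t : ℤ)
    (hgcd : Int.gcd (h : ℤ) (s - t) = 1)
    (Y : Set ℤ) (hYinf : Y.Infinite) (hYgaps : InfiniteGaps Y)
    (X : Set ℤ) (hX : X = Yᶜ)
    (A : Set ℤ) (hA : A = {s} ∪ {m : ℤ | ∃ x ∈ X, m = (h : ℤ) * x + t})
    (b : ℤ) (hb : b ∉ A) (hbs : ¬ b ≡ s [ZMOD (h : ℤ)]) (hbt : ¬ b ≡ t [ZMOD (h : ℤ)]) :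
    (sumset h (A ∪ {b}))ᶜ.Finite := by
  have H2 : (2 : ℤ) ≤ (h : ℤ) := by exact_mod_cast hh
  obtain ⟨u, v, huv⟩ : ∃ u v : ℤ, u * (h : ℤ) + v * (s - t) = 1 := by
    obtain ⟨u, v, huv⟩ := Int.isCoprime_iff_gcd_eq_one.mpr hgcd
    exact ⟨u, v, huv⟩
  have hbsd : ¬ ((h : ℤ) ∣ (s - b)) := fun hd => hbs (Int.modEq_iff_dvd.mpr hd)
  have hbtd : ¬ ((h : ℤ) ∣ (t - b)) := fun hd => hbt (Int.modEq_iff_dvd.mpr hd)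
  suffices hall : ∀ n : ℤ, n ∈ sumset h (A ∪ {b}) by
    have he : (sumset h (A ∪ {b}))ᶜ = ∅ := by
      rw [Set.compl_empty_iff]
      exact Set.eq_univ_of_forall hall
    rw [he]
    exact Set.finite_empty
  intro n
  obtain ⟨j, k, w, hjk, hw⟩ : ∃ (j k : ℕ) (w : ℤ),
      j + k + 2 ≤ h ∧
      n - ((j : ℤ) * s + (k : ℤ) * b + ((h : ℤ) - j - k) * t) = (h : ℤ) * w := by
    set d : ℤ := (n * v) % (h : ℤ) with hdd
    have hd0 : 0 ≤ d := Int.emod_nonneg _ (by omega)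
    have hdh : d < (h : ℤ) := Int.emod_lt_of_pos _ (by omega)
    set q : ℤ := (n * v) / (h : ℤ) with hqq
    have hq : d = n * v - (h : ℤ) * q := by rw [hdd, hqq, Int.emod_def]
    by_cases hcase : d ≤ (h : ℤ) - 2
    · refine ⟨d.toNat, 0, n * u + q * (s - t) - t, by omega, ?_⟩
      have hcast : (d.toNat : ℤ) = d := Int.toNat_of_nonneg hd0
      rw [hcast]
      push_cast
      linear_combination (-n) * huv - (s - t) * hq
    · have hd1 : d = (h : ℤ) - 1 := by omega
      set d' : ℤ := ((n - b + t) * v) % (h : ℤ) with hdd'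
      have hd'0 : 0 ≤ d' := Int.emod_nonneg _ (by omega)
      have hd'h : d' < (h : ℤ) := Int.emod_lt_of_pos _ (by omega)
      set q' : ℤ := ((n - b + t) * v) / (h : ℤ) with hqq'
      have hq' : d' = (n - b + t) * v - (h : ℤ) * q' := by rw [hdd', hqq', Int.emod_def]
      have hne1 : d' ≠ (h : ℤ) - 1 := by
        intro he
        refine hbtd ⟨(t - b) * u + (s - t) * (q' - q), ?_⟩
        linear_combination (s - t) * he - (s - t) * hd1 - (s - t) * hq' +
          (s - t) * hq - (t - b) * huv
      have hne2 : d' ≠ (h : ℤ) - 2 := by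
        intro he
        refine hbsd ⟨(t - b) * u + (s - t) * (q' - q), ?_⟩
        linear_combination (s - t) * he - (s - t) * hd1 - (s - t) * hq' +
          (s - t) * hq - (t - b) * huv
      refine ⟨d'.toNat, 1, (n - b + t) * u + q' * (s - t) - t, by omega, ?_⟩
      have hcast : (d'.toNat : ℤ) = d' := Int.toNat_of_nonneg hd'0
      rw [hcast]
      push_cast
      linear_combination (-(n - b + t)) * huv - (s - t) * hq'
  obtain ⟨x₀, x₀', hx₀, -, -⟩ := exists_two hYgaps 0
  set m : ℕ := h - j - k with hm
  have hmk : j + k + m = h := by omega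
  have hm2 : 2 ≤ m := by omega
  obtain ⟨x₁, x₂, hx₁, hx₂, hx12⟩ := exists_two hYgaps (w - ((m : ℤ) - 2) * x₀)
  have hsA : s ∈ A ∪ {b} := by
    rw [hA]
    exact Or.inl (Or.inl rfl)
  have hbA : b ∈ A ∪ {b} := Or.inr rfl
  have hxA : ∀ x : ℤ, x ∉ Y → (h : ℤ) * x + t ∈ A ∪ {b} := by
    intro x hx
    rw [hA]
    exact Or.inl (Or.inr ⟨x, by rw [hX]; exact hx, rfl⟩)
  have T := sumset_add (sumset_const hsA j) (sumset_add (sumset_const hbA k)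
    (sumset_add (sumset_const (hxA x₀ hx₀) (m - 2))
      (sumset_add (sumset_one (hxA x₁ hx₁)) (sumset_one (hxA x₂ hx₂)))))
  have hidx : j + (k + ((m - 2) + (1 + 1))) = h := by omega
  rw [hidx] at T
  have hmz : (m : ℤ) = (h : ℤ) - j - k := by omega
  have hc : ((m - 2 : ℕ) : ℤ) = (h : ℤ) - j - k - 2 := by omega
  rw [hmz] at hx12
  have heq : n = (j : ℤ) * s + ((k : ℤ) * b + (((m - 2 : ℕ) : ℤ) * ((h : ℤ) * x₀ + t) +
      (((h : ℤ) * x₁ + t) + ((h : ℤ) * x₂ + t)))) := by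
    rw [hc]
    linear_combination hw + (h : ℤ) * hx12
  rw [heq]
  exact T
end

section
/- Let h ≥ 2, let s, t ∈ ℤ with gcd(h, s−t) = 1, let Y ⊆ ℤ be infinite with infinite gaps, X = ℤ \ Y, and A = {s} ∪ {hx + t : x ∈ X}. If b = hy' + t with y' ∈ Y, then the h-fold sumset of A ∪ {b} equals hA ∪ F' ∪ {(h−1)s + b} for some finite set F' ⊆ ℤ; in particular, A ∪ {b} is still an asymptotic nonbasis of order h for ℤ. -/
lemma sumset_mono {p : ℕ} {A B : Set ℤ} (hAB : A ⊆ B) : sumset p A ⊆ sumset p B := by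
  rintro n ⟨f, hf, rfl⟩
  exact ⟨f, fun i => hAB (hf i), rfl⟩

lemma mem_sumset_add {p q : ℕ} {A : Set ℤ} {a c : ℤ}
    (ha : a ∈ sumset p A) (hc : c ∈ sumset q A) : a + c ∈ sumset (p + q) A := by
  obtain ⟨f, hf, rfl⟩ := ha
  obtain ⟨g, hg, rfl⟩ := hc
  refine ⟨Fin.append f g, fun i => ?_, ?_⟩
  · refine Fin.addCases (fun i => ?_) (fun i => ?_) i
    · simpa [Fin.append_left] using hf i
    · simpa [Fin.append_right] using hg i
  · rw [Fin.sum_univ_add]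
    simp [Fin.append_left, Fin.append_right]

lemma const_mem_sumset {q : ℕ} {A : Set ℤ} {c : ℤ} (hc : c ∈ A) :
    (q : ℤ) * c ∈ sumset q A :=
  ⟨fun _ => c, fun _ => hc, by simp [Finset.sum_const, nsmul_eq_mul]⟩

lemma mem_sumset_one {A : Set ℤ} {a : ℤ} : a ∈ sumset 1 A ↔ a ∈ A := by
  constructor
  · rintro ⟨f, hf, rfl⟩
    simpa using hf 0
  · intro ha
    exact ⟨fun _ => a, fun _ => ha, by simp⟩

lemma sumset_zero (A : Set ℤ) : sumset 0 A = {0} := by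
  ext n
  constructor
  · rintro ⟨f, _, rfl⟩; simp
  · intro hn
    rw [Set.mem_singleton_iff] at hn
    exact ⟨fun i => i.elim0, fun i => i.elim0, by simp [hn]⟩

lemma map_mem_sumset {h q : ℕ} {t : ℤ} {X : Set ℤ} {m : ℤ} (hm : m ∈ sumset q X) :
    (h : ℤ) * m + (q : ℤ) * t ∈ sumset q {z : ℤ | ∃ x ∈ X, z = (h : ℤ) * x + t} := by
  obtain ⟨f, hf, rfl⟩ := hm
  refine ⟨fun i => (h : ℤ) * f i + t, fun i => ⟨f i, hf i, rfl⟩, ?_⟩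
  rw [Finset.sum_add_distrib, ← Finset.mul_sum, Finset.sum_const, Finset.card_univ,
    Fintype.card_fin, nsmul_eq_mul]

lemma two_rep (Y : Set ℤ) (hYgaps : InfiniteGaps Y) (n : ℤ) :
    ∃ u v : ℤ, u ∉ Y ∧ v ∉ Y ∧ n = u + v := by
  classical
  have hPfin : {p : ℤ × ℤ | p.1 ∈ Y ∧ p.2 ∈ Y ∧ p.1 ≠ p.2 ∧ |p.1 - p.2| ≤ 2}.Finite :=
    hYgaps 2 (by norm_num)
  set B : Set ℤ := Prod.fst '' {p : ℤ × ℤ | p.1 ∈ Y ∧ p.2 ∈ Y ∧ p.1 ≠ p.2 ∧ |p.1 - p.2| ≤ 2}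
    with hBdef
  have hBfin : B.Finite := hPfin.image _
  have hmemB : ∀ p q : ℤ, p ∈ Y → q ∈ Y → p ≠ q → |p - q| ≤ 2 → p ∈ B :=
    fun p q hp hq hne hle => ⟨(p, q), ⟨hp, hq, hne, hle⟩, rfl⟩
  obtain ⟨M, hM⟩ : ∃ M : ℤ, ∀ β ∈ B, |β| ≤ M := by
    rcases (hBfin.image abs).bddAbove with ⟨M, hM⟩
    exact ⟨M, fun β hβ => hM ⟨β, hβ, rfl⟩⟩
  set u₀ : ℤ := |n| + M + 1 with hu₀
  have hnotB : ∀ i : ℤ, 0 ≤ i → u₀ + i ∉ B := by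
    intro i hi hmem
    have h1 := hM _ hmem
    have h2 : u₀ + i ≤ |u₀ + i| := le_abs_self _
    have h3 : 0 ≤ |n| := abs_nonneg n
    have h4 : n ≤ |n| := le_abs_self n
    simp only [hu₀] at h2
    linarith
  have hnotB' : ∀ i : ℤ, 0 ≤ i → n - (u₀ + i) ∉ B := by
    intro i hi hmem
    have h1 := hM _ hmem
    have h2 : -(n - (u₀ + i)) ≤ |n - (u₀ + i)| := neg_le_abs _
    have h4 : n ≤ |n| := le_abs_self n
    simp only [hu₀] at h2
    linarith
  have key : ∀ i j : ℤ, 0 ≤ i → i ≤ 2 → 0 ≤ j → j ≤ 2 → i ≠ j →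
      u₀ + i ∈ Y → u₀ + j ∈ Y → False := by
    intro i j hi0 hi2 hj0 hj2 hne hYi hYj
    refine hnotB i hi0 (hmemB _ _ hYi hYj (by intro hc; apply hne; linarith) ?_)
    have : (u₀ + i) - (u₀ + j) = i - j := by ring
    rw [this]
    rw [abs_le]
    omega
  have key' : ∀ i j : ℤ, 0 ≤ i → i ≤ 2 → 0 ≤ j → j ≤ 2 → i ≠ j →
      n - (u₀ + i) ∈ Y → n - (u₀ + j) ∈ Y → False := by
    intro i j hi0 hi2 hj0 hj2 hne hYi hYj
    refine hnotB' i hi0 (hmemB _ _ hYi hYj (by intro hc; apply hne; linarith) ?_)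
    have : (n - (u₀ + i)) - (n - (u₀ + j)) = j - i := by ring
    rw [this]
    rw [abs_le]
    omega
  by_cases h0 : u₀ ∈ Y
  · have h0' : u₀ + 0 ∈ Y := by simpa using h0
    have h1 : u₀ + 1 ∉ Y := fun hc => key 0 1 le_rfl (by norm_num) (by norm_num) (by norm_num)
      (by norm_num) h0' hc
    have h2 : u₀ + 2 ∉ Y := fun hc => key 0 2 le_rfl (by norm_num) (by norm_num) (by norm_num)
      (by norm_num) h0' hc
    by_cases h1' : n - (u₀ + 1) ∈ Y
    · have h2' : n - (u₀ + 2) ∉ Y := fun hc => key' 1 2 (by norm_num) (by norm_num) (by norm_num)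
        (by norm_num) (by norm_num) h1' hc
      exact ⟨u₀ + 2, n - (u₀ + 2), h2, h2', by ring⟩
    · exact ⟨u₀ + 1, n - (u₀ + 1), h1, h1', by ring⟩
  · by_cases h0' : n - (u₀ + 0) ∈ Y
    · have h1' : n - (u₀ + 1) ∉ Y := fun hc => key' 0 1 le_rfl (by norm_num) (by norm_num)
        (by norm_num) (by norm_num) h0' hc
      have h2' : n - (u₀ + 2) ∉ Y := fun hc => key' 0 2 le_rfl (by norm_num) (by norm_num)
        (by norm_num) (by norm_num) h0' hc
      by_cases h1 : u₀ + 1 ∈ Y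
      · have h2 : u₀ + 2 ∉ Y := fun hc => key 1 2 (by norm_num) (by norm_num) (by norm_num)
          (by norm_num) (by norm_num) h1 hc
        exact ⟨u₀ + 2, n - (u₀ + 2), h2, h2', by ring⟩
      · exact ⟨u₀ + 1, n - (u₀ + 1), h1, h1', by ring⟩
    · exact ⟨u₀ + 0, n - (u₀ + 0), by simpa using h0, h0', by ring⟩

lemma sumset_compl_eq_univ (Y : Set ℤ) (hYgaps : InfiniteGaps Y) (r : ℕ) :
    ∀ z : ℤ, z ∈ sumset (r + 2) Yᶜ := by
  induction r with
  | zero =>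
    intro z
    obtain ⟨u, v, hu, hv, rfl⟩ := two_rep Y hYgaps z
    refine ⟨![u, v], ?_, ?_⟩
    · intro i
      fin_cases i <;> simpa
    · simp [Fin.sum_univ_two]
  | succ r ih =>
    intro z
    obtain ⟨u, v, hu, hv, huv⟩ := two_rep Y hYgaps 0
    have h1 : u ∈ sumset 1 Yᶜ := mem_sumset_one.mpr hu
    have h2 : z - u ∈ sumset (r + 2) Yᶜ := ih (z - u)
    have h3 := mem_sumset_add h1 h2
    rw [show 1 + (r + 2) = r + 1 + 2 from by omega] at h3
    simpa using h3

lemma decomp {h : ℕ} {s t b : ℤ} {X A : Set ℤ}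
    (hA : A = {s} ∪ {m : ℤ | ∃ x ∈ X, m = (h : ℤ) * x + t}) {n : ℤ}
    (hn : n ∈ sumset h (A ∪ {b})) :
    ∃ j k : ℕ, ∃ m : ℤ, j + k ≤ h ∧ m ∈ sumset (h - j - k) X ∧
      n = (j : ℤ) * s + (k : ℤ) * b + ((h : ℤ) - j - k) * t + (h : ℤ) * m := by
  classical
  obtain ⟨f, hf, rfl⟩ := hn
  set S := Finset.univ.filter (fun i : Fin h => f i = s) with hSdef
  set K := Finset.univ.filter (fun i : Fin h => ¬ f i = s ∧ f i = b) with hKdef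
  set R := Finset.univ.filter (fun i : Fin h => ¬ f i = s ∧ ¬ f i = b) with hRdef
  have hRX : ∀ i : Fin h, ∃ x, i ∈ R → (x ∈ X ∧ f i = (h : ℤ) * x + t) := by
    intro i
    by_cases hi : i ∈ R
    · rw [hRdef, Finset.mem_filter] at hi
      have hfi := hf i
      simp only [hA, Set.mem_union, Set.mem_singleton_iff, Set.mem_setOf_eq] at hfi
      rcases hfi with (hs | ⟨x, hx, hxe⟩) | hfb
      · exact absurd hs hi.2.1
      · exact ⟨x, fun _ => ⟨hx, hxe⟩⟩
      · exact absurd hfb hi.2.2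
    · exact ⟨0, fun h' => absurd h' hi⟩
  choose x hx using hRX
  have hsplit : ∑ i, f i = (∑ i ∈ S, f i) + ((∑ i ∈ K, f i) + (∑ i ∈ R, f i)) := by
    rw [hSdef, hKdef, hRdef]
    rw [← Finset.sum_filter_add_sum_filter_not Finset.univ (fun i => f i = s) f]
    congr 1
    rw [← Finset.sum_filter_add_sum_filter_not
      (Finset.univ.filter (fun i : Fin h => ¬ f i = s)) (fun i => f i = b) f,
      Finset.filter_filter, Finset.filter_filter]
  have hcard : S.card + K.card + R.card = h := by
    have h1 := Finset.card_filter_add_card_filter_not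
      (s := (Finset.univ : Finset (Fin h))) (p := fun i : Fin h => f i = s)
    have h2 := Finset.card_filter_add_card_filter_not
      (s := Finset.univ.filter (fun i : Fin h => ¬ f i = s)) (p := fun i : Fin h => f i = b)
    rw [Finset.filter_filter, Finset.filter_filter] at h2
    simp only [Finset.card_univ, Fintype.card_fin] at h1
    rw [hSdef, hKdef, hRdef]
    omega
  refine ⟨S.card, K.card, ∑ i ∈ R, x i, by omega, ?_, ?_⟩
  · have hcR : h - S.card - K.card = R.card := by omega
    rw [hcR]
    refine ⟨fun i => x (R.equivFin.symm i), fun i => (hx _ (R.equivFin.symm i).2).1, ?_⟩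
    rw [← Finset.sum_coe_sort R x]
    exact (Equiv.sum_comp R.equivFin.symm (fun a : R => x a)).symm
  · have hS : ∑ i ∈ S, f i = (S.card : ℤ) * s := by
      have hv : ∀ i ∈ S, f i = s := fun i hi => (Finset.mem_filter.mp hi).2
      rw [Finset.sum_congr rfl hv, Finset.sum_const, nsmul_eq_mul]
    have hK : ∑ i ∈ K, f i = (K.card : ℤ) * b := by
      have hv : ∀ i ∈ K, f i = b := fun i hi => (Finset.mem_filter.mp hi).2.2
      rw [Finset.sum_congr rfl hv, Finset.sum_const, nsmul_eq_mul]
    have hRsum : ∑ i ∈ R, f i = (h : ℤ) * (∑ i ∈ R, x i) + (R.card : ℤ) * t := by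
      have hv : ∀ i ∈ R, f i = (h : ℤ) * x i + t := fun i hi => (hx i hi).2
      rw [Finset.sum_congr rfl hv, Finset.sum_add_distrib, ← Finset.mul_sum,
        Finset.sum_const, nsmul_eq_mul]
    have hcz : (S.card : ℤ) + K.card + R.card = h := by exact_mod_cast hcard
    rw [hsplit, hS, hK, hRsum]
    linear_combination t * hcz

theorem stmt10 (h : ℕ) (hh : 2 ≤ h) (s t : ℤ)
    (hgcd : Int.gcd (h : ℤ) (s - t) = 1)
    (Y : Set ℤ) (hYinf : Y.Infinite) (hYgaps : InfiniteGaps Y)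
    (X : Set ℤ) (hX : X = Yᶜ)
    (A : Set ℤ) (hA : A = {s} ∪ {m : ℤ | ∃ x ∈ X, m = (h : ℤ) * x + t})
    (b : ℤ) (y' : ℤ) (hy' : y' ∈ Y) (hb : b = (h : ℤ) * y' + t) :
    (∃ F' : Set ℤ, F'.Finite ∧
      sumset h (A ∪ {b}) = sumset h A ∪ F' ∪ {((h : ℤ) - 1) * s + b}) ∧
    (sumset h (A ∪ {b}))ᶜ.Infinite := by
  classical
  subst hX
  subst hA
  subst hb
  set T : Set ℤ := {m : ℤ | ∃ x ∈ Yᶜ, m = (h : ℤ) * x + t} with hTdef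
  set A : Set ℤ := {s} ∪ T with hAdef
  set b : ℤ := (h : ℤ) * y' + t with hbdef
  have hsA : s ∈ A := Set.mem_union_left _ rfl
  have hco : IsCoprime (h : ℤ) (s - t) := Int.isCoprime_iff_gcd_eq_one.mpr hgcd
  have hcast1 : ((h - 1 : ℕ) : ℤ) = (h : ℤ) - 1 := by omega
  -- main characterization
  have main : ∀ n ∈ sumset h (A ∪ {b}), n ∈ sumset h A ∨ n = ((h : ℤ) - 1) * s + b := by
    intro n hn
    obtain ⟨j, k, m, hjk, hm, heq⟩ := decomp hAdef hn
    by_cases hk : k = 0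
    · subst hk
      left
      by_cases hjh : j = h
      · rw [show h - j - 0 = 0 from by omega, sumset_zero] at hm
        rw [Set.mem_singleton_iff] at hm
        have hjz : (j : ℤ) = (h : ℤ) := by omega
        have hn' : n = (h : ℤ) * s := by rw [heq, hm, hjz]; push_cast; ring
        rw [hn']
        exact const_mem_sumset hsA
      · have hjlt : j < h := by omega
        have h1 : ((j : ℤ)) * s ∈ sumset j A := const_mem_sumset hsA
        rw [show h - j - 0 = h - j from by omega] at hm
        have h2 : (h : ℤ) * m + ((h - j : ℕ) : ℤ) * t ∈ sumset (h - j) A :=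
          sumset_mono Set.subset_union_right (map_mem_sumset hm)
        have h3 := mem_sumset_add h1 h2
        rw [show j + (h - j) = h from by omega] at h3
        have hn' : n = (j : ℤ) * s + ((h : ℤ) * m + ((h - j : ℕ) : ℤ) * t) := by
          rw [heq]
          have : ((h - j : ℕ) : ℤ) = (h : ℤ) - j := by omega
          rw [this]; push_cast; ring
        rw [hn']
        exact h3
    · have hjlt : j < h := by omega
      by_cases hj2 : 2 ≤ h - j
      · left
        have hw : (k : ℤ) * y' + m ∈ sumset (h - j) Yᶜ := by
          have := sumset_compl_eq_univ Y hYgaps (h - j - 2) ((k : ℤ) * y' + m)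
          rwa [show h - j - 2 + 2 = h - j from by omega] at this
        have h1 : ((j : ℤ)) * s ∈ sumset j A := const_mem_sumset hsA
        have h2 : (h : ℤ) * ((k : ℤ) * y' + m) + ((h - j : ℕ) : ℤ) * t ∈ sumset (h - j) A :=
          sumset_mono Set.subset_union_right (map_mem_sumset hw)
        have h3 := mem_sumset_add h1 h2
        rw [show j + (h - j) = h from by omega] at h3
        have hn' : n = (j : ℤ) * s + ((h : ℤ) * ((k : ℤ) * y' + m) + ((h - j : ℕ) : ℤ) * t) := by
          rw [heq, hbdef]
          have : ((h - j : ℕ) : ℤ) = (h : ℤ) - j := by omega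
          rw [this]; push_cast; ring
        rw [hn']
        exact h3
      · right
        have hj1 : h - j = 1 := by omega
        have hk1 : k = 1 := by omega
        rw [show h - j - k = 0 from by omega, sumset_zero] at hm
        rw [Set.mem_singleton_iff] at hm
        rw [heq, hm, hk1]
        have hjz : (j : ℤ) = (h : ℤ) - 1 := by omega
        rw [hjz]; push_cast; ring
  -- the distinguished point is in the sumset
  have hpt : ((h : ℤ) - 1) * s + b ∈ sumset h (A ∪ {b}) := by
    have h1 : ((h - 1 : ℕ) : ℤ) * s ∈ sumset (h - 1) (A ∪ {b}) :=
      const_mem_sumset (Set.mem_union_left _ hsA)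
    have h2 : b ∈ sumset 1 (A ∪ {b}) :=
      mem_sumset_one.mpr (Set.mem_union_right _ rfl)
    have h3 := mem_sumset_add h1 h2
    rw [show h - 1 + 1 = h from by omega] at h3
    rwa [hcast1] at h3
  constructor
  · refine ⟨∅, Set.finite_empty, ?_⟩
    rw [Set.union_empty]
    ext n
    constructor
    · intro hn
      rcases main n hn with hn' | hn'
      · exact Set.mem_union_left _ hn'
      · exact Set.mem_union_right _ hn'
    · intro hn
      rcases hn with hn' | hn'
      · exact sumset_mono Set.subset_union_left hn'
      · rw [Set.mem_singleton_iff] at hn'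
        rw [hn']
        exact hpt
  · -- complement is infinite
    have notmem : ∀ y ∈ Y, y ≠ y' →
        ((h : ℤ) - 1) * s + t + (h : ℤ) * y ∉ sumset h (A ∪ {b}) := by
      intro y hy hne hmem
      obtain ⟨j, k, m, hjk, hm, heq⟩ := decomp hAdef hmem
      rw [hbdef] at heq
      have key : ((h : ℤ) - 1 - j) * (s - t) = (h : ℤ) * ((k : ℤ) * y' + m - y) := by
        linear_combination heq
      have hdvd : (h : ℤ) ∣ ((h : ℤ) - 1 - (j : ℤ)) :=
        hco.dvd_of_dvd_mul_right ⟨_, key⟩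
      obtain ⟨q, hq⟩ := hdvd
      have hhz : (2 : ℤ) ≤ (h : ℤ) := by exact_mod_cast hh
      have hjz : (j : ℤ) + (k : ℤ) ≤ (h : ℤ) := by exact_mod_cast hjk
      have hj0 : (0 : ℤ) ≤ (j : ℤ) := Int.natCast_nonneg j
      have hk0 : (0 : ℤ) ≤ (k : ℤ) := Int.natCast_nonneg k
      have hq0 : q = 0 := by
        rcases lt_trichotomy q 0 with h' | h' | h'
        · have h1 : q ≤ -1 := by omega
          nlinarith
        · exact h'
        · have h1 : 1 ≤ q := by omega
          nlinarith
      have hjh : (j : ℤ) = (h : ℤ) - 1 := by rw [hq0, mul_zero] at hq; linarith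
      have hjn : j = h - 1 := by omega
      have hk1 : k ≤ 1 := by omega
      have hmy : (k : ℤ) * y' + m = y := by
        have h0 : (h : ℤ) * ((k : ℤ) * y' + m - y) = 0 := by
          rw [← key, hjh]; ring
        rcases mul_eq_zero.mp h0 with hc | hc
        · linarith
        · linarith
      interval_cases k
      · rw [show h - j - 0 = 1 from by omega] at hm
        rw [mem_sumset_one] at hm
        apply hm
        simp only [Nat.cast_zero, zero_mul, zero_add] at hmy
        rwa [hmy]
      · rw [show h - j - 1 = 0 from by omega, sumset_zero, Set.mem_singleton_iff] at hm
        apply hne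
        simp only [Nat.cast_one, one_mul, hm, add_zero] at hmy
        omega
    have himg : ((fun y => ((h : ℤ) - 1) * s + t + (h : ℤ) * y) '' (Y \ {y'})) ⊆
        (sumset h (A ∪ {b}))ᶜ := by
      rintro _ ⟨y, ⟨hy, hyne⟩, rfl⟩
      exact notmem y hy (by simpa using hyne)
    have hinj : Set.InjOn (fun y => ((h : ℤ) - 1) * s + t + (h : ℤ) * y) (Y \ {y'}) := by
      intro a _ c _ hac
      simp only at hac
      have hh0 : (h : ℤ) ≠ 0 := by positivity
      have : (h : ℤ) * a = (h : ℤ) * c := by linarith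
      exact mul_left_cancel₀ hh0 this
    have hYdiff : (Y \ {y'}).Infinite := hYinf.diff (Set.finite_singleton y')
    exact (hYdiff.image hinj).mono himg
end

section
/- Let h ≥ 2, let s, t ∈ ℤ with gcd(h, s−t) = 1, let Y ⊆ ℤ be infinite with infinite gaps, X = ℤ \ Y, and A = {s} ∪ {hx + t : x ∈ X}. For a subset Y' ⊆ Y, let B_{Y'} = {hy' + t : y' ∈ Y'}. Then A ∪ B_{Y'} is an asymptotic nonbasis of order h for ℤ if and only if Y \ Y' is infinite. -/
lemma sum_ite_range (n k : ℕ) (hk : k ≤ n) (s c : ℤ) :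
    ∑ i ∈ Finset.range n, (if i < k then s else c) = k * s + ((n:ℤ) - k) * c := by
  rw [Finset.sum_ite]
  have h1 : (Finset.range n).filter (fun i => i < k) = Finset.range k := by
    ext i; simp; omega
  have h2 : (Finset.range n).filter (fun i => ¬ i < k) = Finset.Ico k n := by
    ext i; simp; omega
  rw [h1, h2]
  rw [Finset.sum_const, Finset.sum_const, Finset.card_range, Nat.card_Ico,
    nsmul_eq_mul, nsmul_eq_mul, Nat.cast_sub hk]

lemma sum_ite2 (h k : ℕ) (hk : k ≤ h) (s c : ℤ) :
    ∑ i : Fin h, (if (i:ℕ) < k then s else c) = k * s + ((h:ℤ) - k) * c := by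
  rw [Fin.sum_univ_eq_sum_range (fun j => if j < k then s else c)]
  exact sum_ite_range h k hk s c

lemma sum_ite3 (h k : ℕ) (hh : 1 ≤ h) (hk : k ≤ h - 1) (s c d : ℤ) :
    ∑ i : Fin h, (if (i:ℕ) < k then s else if (i:ℕ) < h - 1 then c else d)
      = k * s + ((h:ℤ) - 1 - k) * c + d := by
  obtain ⟨m, rfl⟩ : ∃ m, h = m + 1 := ⟨h - 1, by omega⟩
  rw [Fin.sum_univ_eq_sum_range (fun j => if j < k then s else if j < (m+1) - 1 then c else d)]
  rw [Finset.sum_range_succ]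
  have e : ∀ j ∈ Finset.range m,
      (if j < k then s else if j < (m+1) - 1 then c else d) = (if j < k then s else c) := by
    intro j hj
    simp only [Finset.mem_range] at hj
    split
    · rfl
    · rw [if_pos (by omega)]
  rw [Finset.sum_congr rfl e, sum_ite_range m k (by omega)]
  rw [if_neg (by omega), if_neg (by omega)]
  push_cast
  ring

theorem stmt11 (h : ℕ) (hh : 2 ≤ h) (s t : ℤ)
    (hgcd : Int.gcd (h : ℤ) (s - t) = 1)
    (Y : Set ℤ) (hYinf : Y.Infinite) (hYgaps : InfiniteGaps Y)
    (X : Set ℤ) (hX : X = Yᶜ)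
    (A : Set ℤ) (hA : A = {s} ∪ {m : ℤ | ∃ x ∈ X, m = (h : ℤ) * x + t})
    (Y' : Set ℤ) (hY' : Y' ⊆ Y)
    (B : Set ℤ) (hB : B = {m : ℤ | ∃ y ∈ Y', m = (h : ℤ) * y + t}) :
    (sumset h (A ∪ B))ᶜ.Infinite ↔ (Y \ Y').Infinite := by
  classical
  subst hX hA hB
  set W : Set ℤ := Y \ Y' with hWdef
  set U : Set ℤ := ({s} ∪ {m : ℤ | ∃ x ∈ Yᶜ, m = (h : ℤ) * x + t})
      ∪ {m : ℤ | ∃ y ∈ Y', m = (h : ℤ) * y + t} with hUdef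
  have hcop : IsCoprime (h : ℤ) (s - t) := Int.isCoprime_iff_gcd_eq_one.mpr hgcd
  have hh2 : (2 : ℤ) ≤ (h : ℤ) := by exact_mod_cast hh
  -- membership
  have hmem : ∀ z : ℤ, z ∉ W → (h : ℤ) * z + t ∈ U := by
    intro z hz
    simp only [hWdef, Set.mem_diff, not_and, not_not] at hz
    by_cases hzY : z ∈ Y
    · right; exact ⟨z, hz hzY, rfl⟩
    · left; right; exact ⟨z, hzY, rfl⟩
  have hmem' : ∀ v ∈ U, v = s ∨ ∃ z, z ∉ W ∧ v = (h : ℤ) * z + t := by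
    rintro v (hv | hv)
    · rcases hv with hv | ⟨x, hx, rfl⟩
      · left; exact hv
      · right; exact ⟨x, fun hw => hx hw.1, rfl⟩
    · rcases hv with ⟨y, hy, rfl⟩
      right; exact ⟨y, fun hw => hw.2 hy, rfl⟩
  -- decomposition of elements of the sumset
  have hdecomp : ∀ n ∈ sumset h U, ∃ (k : ℕ) (q : ℤ), k ≤ h ∧
      n = (k : ℤ) * s + ((h : ℤ) - k) * t + (h : ℤ) * q ∧ (k = h - 1 → q ∉ W) := by
    rintro n ⟨f, hf, rfl⟩
    set S : Finset (Fin h) := Finset.univ.filter (fun i => f i = s) with hS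
    have hz : ∀ i, i ∉ S → ∃ z, z ∉ W ∧ f i = (h : ℤ) * z + t := by
      intro i hi
      rcases hmem' (f i) (hf i) with h1 | h2
      · exact absurd (by simp [hS, h1]) hi
      · exact h2
    choose! z hzW hzf using hz
    have hcard : S.card ≤ h := by
      simpa using S.card_le_univ
    refine ⟨S.card, ∑ i ∈ Sᶜ, z i, hcard, ?_, ?_⟩
    · rw [← Finset.sum_add_sum_compl S f]
      have e1 : ∑ i ∈ S, f i = (S.card : ℤ) * s := by
        rw [Finset.sum_congr rfl (fun i hi => by
          simp only [hS, Finset.mem_filter] at hi; exact hi.2), Finset.sum_const, nsmul_eq_mul]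
      have e2 : ∑ i ∈ Sᶜ, f i = (h : ℤ) * (∑ i ∈ Sᶜ, z i) + (Sᶜ.card : ℤ) * t := by
        rw [Finset.sum_congr rfl (fun i hi => hzf i (Finset.mem_compl.mp hi)),
          Finset.sum_add_distrib, ← Finset.mul_sum, Finset.sum_const, nsmul_eq_mul]
      have e3 : (Sᶜ.card : ℤ) = (h : ℤ) - S.card := by
        have := Finset.card_compl S
        simp only [Fintype.card_fin] at this
        rw [this, Nat.cast_sub hcard]
      rw [e1, e2, e3]; ring
    · intro hk
      have hc1 : Sᶜ.card = 1 := by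
        have := Finset.card_compl S
        simp only [Fintype.card_fin] at this
        omega
      obtain ⟨i0, hi0⟩ := Finset.card_eq_one.mp hc1
      rw [hi0, Finset.sum_singleton]
      exact hzW i0 (Finset.mem_compl.mp (hi0 ▸ Finset.mem_singleton_self i0))
  constructor
  · -- complement infinite → W infinite
    intro hinf
    by_contra hWfin
    rw [Set.not_infinite] at hWfin
    apply hinf
    have hsub : (sumset h U)ᶜ ⊆ (fun w => ((h : ℤ) - 1) * s + t + (h : ℤ) * w) '' W := by
      intro n hn
      obtain ⟨a, b, hab⟩ := hcop
      set r : ℤ := (b * (n - h * t)) % (h : ℤ) with hr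
      have hh0 : (0 : ℤ) < h := by omega
      have hr0 : 0 ≤ r := Int.emod_nonneg _ (by omega)
      have hrh : r < h := Int.emod_lt_of_pos _ hh0
      have hdvd : (h : ℤ) ∣ (n - h * t - r * (s - t)) := by
        have d1 : (h : ℤ) ∣ (b * (n - h * t) - r) := by
          rw [hr, Int.emod_def]
          exact ⟨b * (n - h * t) / h, by ring⟩
        have d2 : (h : ℤ) ∣ (n - h * t) * (1 - b * (s - t)) := by
          have e : 1 - b * (s - t) = a * h := by linarith [hab]
          rw [e]; exact ⟨(n - h * t) * a, by ring⟩
        have e : n - h * t - r * (s - t)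
            = (n - h * t) * (1 - b * (s - t)) + (b * (n - h * t) - r) * (s - t) := by ring
        rw [e]; exact dvd_add d2 (d1.mul_right _)
      obtain ⟨q, hq⟩ := hdvd
      set k : ℕ := r.toNat with hkdef
      have hkr : (k : ℤ) = r := Int.toNat_of_nonneg hr0
      have hkh : k < h := by omega
      by_cases hkc : k = h - 1
      · -- then q ∈ W and n is in the image
        have hqW : q ∈ W := by
          by_contra hqW
          apply hn
          refine ⟨fun i => if (i : ℕ) < k then s else (h : ℤ) * q + t, fun i => ?_, ?_⟩
          · dsimp only
            split
            · left; left; rfl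
            · exact hmem q hqW
          · rw [sum_ite2 h k hkh.le]
            have hk1 : (k : ℤ) = (h : ℤ) - 1 := by omega
            have hr1 : r = (h : ℤ) - 1 := by omega
            rw [hr1] at hq
            rw [hk1]
            linear_combination hq
        refine ⟨q, hqW, ?_⟩
        have hr1 : r = (h : ℤ) - 1 := by omega
        rw [hr1] at hq
        simp only
        linear_combination -hq
      · -- k < h - 1 : n is in the sumset, contradiction
        exfalso
        have hkh1 : k < h - 1 := by omega
        set c : ℤ := (h : ℤ) - 1 - k with hcdef
        have hc0 : c ≠ 0 := by omega
        have hpre : ((fun z : ℤ => q - c * z) ⁻¹' W).Finite := by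
          apply Set.Finite.preimage _ hWfin
          intro x _ y _ hxy
          simp only at hxy
          have : c * x = c * y := by linarith
          exact mul_left_cancel₀ hc0 this
        obtain ⟨z0, hz0⟩ := ((hWfin.union hpre).infinite_compl).nonempty
        simp only [Set.mem_compl_iff, Set.mem_union, Set.mem_preimage, not_or] at hz0
        apply hn
        refine ⟨fun i => if (i : ℕ) < k then s
            else if (i : ℕ) < h - 1 then (h : ℤ) * z0 + t else (h : ℤ) * (q - c * z0) + t,
          fun i => ?_, ?_⟩
        · dsimp only
          split
          · left; left; rfl
          · split
            · exact hmem z0 hz0.1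
            · exact hmem _ hz0.2
        · rw [sum_ite3 h k (by omega) (by omega)]
          rw [← hcdef]
          have : n - h * t - k * (s - t) = h * q := by rw [hkr]; exact hq
          have hch : c = (h:ℤ) - 1 - k := hcdef
          ring_nf
          ring_nf at this ⊢
          linarith [this, hch]
    exact hWfin.image _ |>.subset hsub
  · -- W infinite → complement infinite
    intro hWinf
    have hinj : Set.InjOn (fun w => ((h : ℤ) - 1) * s + t + (h : ℤ) * w) W := by
      intro x _ y _ hxy
      simp only at hxy
      have hne : (h : ℤ) ≠ 0 := by omega
      have : (h : ℤ) * x = (h : ℤ) * y := by linarith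
      exact mul_left_cancel₀ hne this
    have hsub : (fun w => ((h : ℤ) - 1) * s + t + (h : ℤ) * w) '' W ⊆ (sumset h U)ᶜ := by
      rintro _ ⟨w, hw, rfl⟩ hmemsum
      obtain ⟨kk, q, hk, heq, hone⟩ := hdecomp _ hmemsum
      simp only at heq
      have hmul : ((kk : ℤ) - ((h : ℤ) - 1)) * (s - t) = (h : ℤ) * (w - q) := by linarith [heq]
      have hdvd : (h : ℤ) ∣ ((kk : ℤ) - ((h : ℤ) - 1)) :=
        hcop.dvd_of_dvd_mul_right ⟨w - q, hmul⟩
      have hkk : (kk : ℤ) = (h : ℤ) - 1 := by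
        rcases hdvd with ⟨cc, hcc⟩
        have hkz : (kk : ℤ) ≤ h := by exact_mod_cast hk
        have hkz0 : (0 : ℤ) ≤ kk := by positivity
        rcases lt_trichotomy cc 0 with hc | hc | hc
        · nlinarith
        · rw [hc, mul_zero] at hcc; omega
        · nlinarith
      have hkkn : kk = h - 1 := by omega
      have hq : q ∉ W := hone hkkn
      apply hq
      have hwq : w = q := by
        rw [hkk] at heq
        have : (h : ℤ) * w = (h : ℤ) * q := by linarith
        exact mul_left_cancel₀ (by omega : (h:ℤ) ≠ 0) this
      rwa [hwq] at hw
    exact (hWinf.image hinj).mono hsub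
end

section
/- Let h ≥ 2, let s, t ∈ ℤ with gcd(h, s−t) = 1, let Y ⊆ ℤ be infinite with infinite gaps, X = ℤ \ Y, and A = {s} ∪ {hx + t : x ∈ X}. Then A is an asymptotic nonbasis of order h for ℤ that is not a subset of any maximal asymptotic nonbasis of order h for ℤ. -/
lemma mem_sumset_zero (M : Set ℤ) : (0:ℤ) ∈ sumset 0 M :=
  ⟨fun i => i.elim0, fun i => i.elim0, by simp⟩

lemma mem_sumset_add_s12 {k : ℕ} {M : Set ℤ} {n u : ℤ} (hn : n ∈ sumset k M) (hu : u ∈ M) :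
    n + u ∈ sumset (k + 1) M := by
  obtain ⟨f, hf, rfl⟩ := hn
  refine ⟨Fin.snoc f u, ?_, ?_⟩
  · intro i
    refine Fin.lastCases ?_ ?_ i
    · simpa using hu
    · intro j; simpa using hf j
  · rw [Fin.sum_univ_castSucc]
    simp

lemma mem_sumset_nsmul {k : ℕ} {M : Set ℤ} {n u : ℤ} (hn : n ∈ sumset k M) (hu : u ∈ M) :
    ∀ a : ℕ, n + (a : ℤ) * u ∈ sumset (k + a) M := by
  intro a
  induction a with
  | zero => simpa using hn
  | succ a ih =>
      have heq : n + ((a:ℤ)+1) * u = n + (a:ℤ) * u + u := by ring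
      push_cast
      rw [heq]
      exact mem_sumset_add_s12 ih hu

lemma sumset_decomp {h : ℕ} {s t : ℤ} (hh : 2 ≤ h) (hco : IsCoprime (h:ℤ) (s - t))
    {M : Set ℤ} {n : ℤ} (hn : n ∈ sumset h M)
    (hcl : ∀ u ∈ M, (h:ℤ) ∣ u - s ∨ (h:ℤ) ∣ u - t)
    (hmod : (h:ℤ) ∣ n - (((h:ℤ) - 1) * s + t)) :
    ∃ (f : Fin h → ℤ) (i₀ : Fin h), (∀ i, f i ∈ M) ∧ (∀ i, i ≠ i₀ → (h:ℤ) ∣ f i - s) ∧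
      (h:ℤ) ∣ f i₀ - t ∧ n = ∑ i, f i := by
  classical
  obtain ⟨f, hf, rfl⟩ := hn
  set I : Finset (Fin h) := Finset.univ.filter (fun i => (h:ℤ) ∣ f i - s) with hI
  have hIc : ∀ i ∈ Finset.univ \ I, (h:ℤ) ∣ f i - t := by
    intro i hi
    rcases hcl (f i) (hf i) with h1 | h1
    · exfalso
      rw [Finset.mem_sdiff, hI, Finset.mem_filter] at hi
      exact hi.2 ⟨Finset.mem_univ _, h1⟩
    · exact h1
  have hsum1 : (h:ℤ) ∣ ∑ i ∈ I, (f i - s) :=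
    Finset.dvd_sum (fun i hi => (Finset.mem_filter.mp hi).2)
  have hsum2 : (h:ℤ) ∣ ∑ i ∈ Finset.univ \ I, (f i - t) := Finset.dvd_sum hIc
  have hle : I.card ≤ h := by
    have := Finset.card_le_univ I
    simpa using this
  have hcard : (Finset.univ \ I).card = h - I.card := by
    rw [Finset.card_sdiff_of_subset (Finset.subset_univ I)]
    simp
  have e2 : (∑ i ∈ I, (f i - s)) + (∑ i ∈ Finset.univ \ I, (f i - t))
      = (∑ i, f i) - ((I.card:ℤ) * s + ((h:ℤ) - I.card) * t) := by
    rw [Finset.sum_sub_distrib, Finset.sum_sub_distrib, Finset.sum_const, Finset.sum_const, hcard,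
        ← Finset.sum_sdiff (Finset.subset_univ I), nsmul_eq_mul, nsmul_eq_mul]
    have hc1 : ((h - I.card : ℕ) : ℤ) = (h:ℤ) - I.card := by omega
    rw [hc1]; ring
  have e1 : (h:ℤ) ∣ (∑ i, f i) - ((I.card:ℤ) * s + ((h:ℤ) - I.card) * t) := by
    rw [← e2]; exact dvd_add hsum1 hsum2
  have e3 : (h:ℤ) ∣ (((h:ℤ)-1) - I.card) * (s - t) := by
    obtain ⟨p, hp⟩ := e1
    obtain ⟨q, hq⟩ := hmod
    exact ⟨p - q, by linear_combination hp - hq⟩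
  have e4 : (h:ℤ) ∣ ((h:ℤ)-1) - I.card := hco.dvd_of_dvd_mul_right e3
  have hm0 : ((h:ℤ)-1) - I.card = 0 := by
    by_contra hm
    have h2 : (h:ℤ) ≤ |((h:ℤ)-1) - I.card| :=
      Int.le_of_dvd (abs_pos.mpr hm) ((dvd_abs _ _).mpr e4)
    have h3 : (0:ℤ) ≤ (I.card:ℤ) := Int.ofNat_nonneg _
    have h4 : (I.card:ℤ) ≤ (h:ℤ) := by exact_mod_cast hle
    rcases abs_cases (((h:ℤ)-1) - (I.card:ℤ)) with ⟨he, _⟩ | ⟨he, _⟩ <;> omega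
  have hcardeq : I.card = h - 1 := by omega
  have hJ : (Finset.univ \ I).card = 1 := by rw [hcard, hcardeq]; omega
  obtain ⟨i₀, hi₀⟩ := Finset.card_eq_one.mp hJ
  refine ⟨f, i₀, hf, ?_, ?_, rfl⟩
  · intro i hi
    have hiI : i ∈ I := by
      by_contra hiI
      have hmem : i ∈ Finset.univ \ I := Finset.mem_sdiff.mpr ⟨Finset.mem_univ _, hiI⟩
      rw [hi₀] at hmem
      exact hi (Finset.mem_singleton.mp hmem)
    exact (Finset.mem_filter.mp hiI).2
  · have hmem : i₀ ∈ Finset.univ \ I := by rw [hi₀]; exact Finset.mem_singleton_self _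
    exact hIc i₀ hmem

lemma cov_gen {h : ℕ} {s t : ℤ} {M X : Set ℤ}
    (hsM : s ∈ M) (hXM : ∀ x ∈ X, (h:ℤ) * x + t ∈ M)
    (two_sum : ∀ n : ℤ, ∃ x x', x ∈ X ∧ x' ∈ X ∧ n = x + x')
    {x₀ : ℤ} (hx₀ : x₀ ∈ X)
    {u : ℤ} (hu : u ∈ M) (a : ℕ) (ha : a + 3 ≤ h) {n : ℤ}
    (hdvd : (h:ℤ) ∣ n - ((a:ℤ) * s + u + ((h:ℤ) - 1 - a) * t)) :
    n ∈ sumset h M := by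
  obtain ⟨P, hP⟩ := hdvd
  obtain ⟨x, x', hx, hx', hxx⟩ := two_sum (P - ((h:ℤ) - 3 - a) * x₀)
  have m1 := mem_sumset_nsmul (mem_sumset_zero M) hsM a
  have m2 := mem_sumset_add_s12 m1 hu
  have m3 := mem_sumset_add_s12 m2 (hXM x hx)
  have m4 := mem_sumset_add_s12 m3 (hXM x' hx')
  have m5 := mem_sumset_nsmul m4 (hXM x₀ hx₀) (h - 3 - a)
  have hidx : 0 + a + 1 + 1 + 1 + (h - 3 - a) = h := by omega
  rw [hidx] at m5
  have hcast : ((h - 3 - a : ℕ) : ℤ) = (h:ℤ) - 3 - a := by omega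
  rw [hcast] at m5
  have heq : n = 0 + (a:ℤ) * s + u + ((h:ℤ) * x + t) + ((h:ℤ) * x' + t)
      + ((h:ℤ) - 3 - a) * ((h:ℤ) * x₀ + t) := by linear_combination hP + (h:ℤ) * hxx
  rwa [heq]

lemma cov0 {h : ℕ} {s t : ℤ} {M X : Set ℤ}
    (hsM : s ∈ M) (hXM : ∀ x ∈ X, (h:ℤ) * x + t ∈ M)
    (two_sum : ∀ n : ℤ, ∃ x x', x ∈ X ∧ x' ∈ X ∧ n = x + x')
    {x₀ : ℤ} (hx₀ : x₀ ∈ X)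
    (a : ℕ) (ha : a + 2 ≤ h) {n : ℤ}
    (hdvd : (h:ℤ) ∣ n - ((a:ℤ) * s + ((h:ℤ) - a) * t)) :
    n ∈ sumset h M := by
  obtain ⟨P, hP⟩ := hdvd
  obtain ⟨x, x', hx, hx', hxx⟩ := two_sum (P - ((h:ℤ) - 2 - a) * x₀)
  have m1 := mem_sumset_nsmul (mem_sumset_zero M) hsM a
  have m3 := mem_sumset_add_s12 m1 (hXM x hx)
  have m4 := mem_sumset_add_s12 m3 (hXM x' hx')
  have m5 := mem_sumset_nsmul m4 (hXM x₀ hx₀) (h - 2 - a)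
  have hidx : 0 + a + 1 + 1 + (h - 2 - a) = h := by omega
  rw [hidx] at m5
  have hcast : ((h - 2 - a : ℕ) : ℤ) = (h:ℤ) - 2 - a := by omega
  rw [hcast] at m5
  have heq : n = 0 + (a:ℤ) * s + ((h:ℤ) * x + t) + ((h:ℤ) * x' + t)
      + ((h:ℤ) - 2 - a) * ((h:ℤ) * x₀ + t) := by linear_combination hP + (h:ℤ) * hxx
  rwa [heq]

lemma cov_class {h : ℕ} {s t : ℤ} (hh : 2 ≤ h) (hco : IsCoprime (h:ℤ) (s - t))
    {M X : Set ℤ} (hsM : s ∈ M) (hXM : ∀ x ∈ X, (h:ℤ) * x + t ∈ M)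
    (two_sum : ∀ n : ℤ, ∃ x x', x ∈ X ∧ x' ∈ X ∧ n = x + x')
    {x₀ : ℤ} (hx₀ : x₀ ∈ X)
    {n : ℤ} (hnc : ¬ (h:ℤ) ∣ n - (((h:ℤ)-1)*s + t)) : n ∈ sumset h M := by
  obtain ⟨aa, e, hab⟩ := hco
  have hh0 : (0:ℤ) < (h:ℤ) := by exact_mod_cast Nat.pos_of_ne_zero (by omega)
  have hhne : (h:ℤ) ≠ 0 := ne_of_gt hh0
  set k : ℤ := (n * e) % h with hk
  have hk0 : 0 ≤ k := Int.emod_nonneg _ hhne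
  have hk1 : k < h := Int.emod_lt_of_pos _ hh0
  have hd1 : (h:ℤ) ∣ n * e - k := Int.dvd_self_sub_of_emod_eq rfl
  obtain ⟨q, hq⟩ := hd1
  have hdvd : (h:ℤ) ∣ n - k * (s - t) :=
    ⟨aa * n + q * (s - t), by linear_combination (s - t) * hq - n * hab⟩
  have hkne : k ≠ (h:ℤ) - 1 := by
    intro hke
    apply hnc
    obtain ⟨w, hw⟩ := hdvd
    rw [hke] at hw
    exact ⟨w - t, by linear_combination hw⟩
  set a : ℕ := k.toNat with han
  have hacast : (a : ℤ) = k := Int.toNat_of_nonneg hk0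
  have ha2 : a + 2 ≤ h := by omega
  apply cov0 hsM hXM two_sum hx₀ a ha2
  obtain ⟨w, hw⟩ := hdvd
  rw [hacast]
  exact ⟨w - t, by linear_combination hw⟩

lemma two_sum_of_gaps {Y : Set ℤ} (hYgaps : InfiniteGaps Y) {X : Set ℤ} (hX : X = Yᶜ) :
    ∀ n : ℤ, ∃ x x', x ∈ X ∧ x' ∈ X ∧ n = x + x' := by
  intro n
  by_contra hcon
  push_neg at hcon
  have hY2 : ∀ m : ℤ, m ∈ Y ∨ n - m ∈ Y := by
    intro m
    by_contra hm
    push_neg at hm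
    exact hcon m (n - m) (by rw [hX]; exact hm.1) (by rw [hX]; exact hm.2) (by ring)
  have hfin := hYgaps 2 two_pos
  obtain ⟨B₁, hB₁⟩ := (hfin.image Prod.fst).bddAbove
  obtain ⟨B₂, hB₂⟩ := (hfin.image Prod.fst).bddBelow
  set m : ℤ := max (B₁ + 1) (n - B₂ + 1) with hm
  have key : ∃ p : ℤ × ℤ,
      (p.1 ∈ Y ∧ p.2 ∈ Y ∧ p.1 ≠ p.2 ∧ |p.1 - p.2| ≤ 2) ∧
      ((m ≤ p.1 ∧ p.1 ≤ m + 2) ∨ (n - m - 2 ≤ p.1 ∧ p.1 ≤ n - m)) := by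
    rcases hY2 m with h0 | h0 <;> rcases hY2 (m+1) with h1 | h1 <;> rcases hY2 (m+2) with h2 | h2
    · exact ⟨(m, m+1), ⟨h0, h1, by omega, by rw [abs_le]; omega⟩, Or.inl (by omega)⟩
    · exact ⟨(m, m+1), ⟨h0, h1, by omega, by rw [abs_le]; omega⟩, Or.inl (by omega)⟩
    · exact ⟨(m, m+2), ⟨h0, h2, by omega, by rw [abs_le]; omega⟩, Or.inl (by omega)⟩
    · exact ⟨(n-(m+1), n-(m+2)), ⟨h1, h2, by omega, by rw [abs_le]; omega⟩, Or.inr (by omega)⟩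
    · exact ⟨(m+1, m+2), ⟨h1, h2, by omega, by rw [abs_le]; omega⟩, Or.inl (by omega)⟩
    · exact ⟨(n-m, n-(m+2)), ⟨h0, h2, by omega, by rw [abs_le]; omega⟩, Or.inr (by omega)⟩
    · exact ⟨(n-m, n-(m+1)), ⟨h0, h1, by omega, by rw [abs_le]; omega⟩, Or.inr (by omega)⟩
    · exact ⟨(n-m, n-(m+1)), ⟨h0, h1, by omega, by rw [abs_le]; omega⟩, Or.inr (by omega)⟩
  obtain ⟨p, hpS, hpw⟩ := key
  have hpF : p.1 ∈ Prod.fst '' {p : ℤ × ℤ | p.1 ∈ Y ∧ p.2 ∈ Y ∧ p.1 ≠ p.2 ∧ |p.1 - p.2| ≤ 2} :=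
    ⟨p, hpS, rfl⟩
  have hub := hB₁ hpF
  have hlb := hB₂ hpF
  have hm1 : B₁ + 1 ≤ m := le_max_left _ _
  have hm2 : n - B₂ + 1 ≤ m := le_max_right _ _
  rcases hpw with ⟨hw1, hw2⟩ | ⟨hw1, hw2⟩ <;> omega

theorem stmt12 (h : ℕ) (hh : 2 ≤ h) (s t : ℤ)
    (hgcd : Int.gcd (h : ℤ) (s - t) = 1)
    (Y : Set ℤ) (hYinf : Y.Infinite) (hYgaps : InfiniteGaps Y)
    (X : Set ℤ) (hX : X = Yᶜ)
    (A : Set ℤ) (hA : A = {s} ∪ {m : ℤ | ∃ x ∈ X, m = (h : ℤ) * x + t}) :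
    (sumset h A)ᶜ.Infinite ∧
    ¬ ∃ M : Set ℤ, A ⊆ M ∧ (sumset h M)ᶜ.Infinite ∧
        ∀ b ∉ M, (sumset h (M ∪ {b}))ᶜ.Finite := by
  classical
  have hh0 : (0:ℤ) < (h:ℤ) := by exact_mod_cast Nat.pos_of_ne_zero (by omega)
  have hhne : (h:ℤ) ≠ 0 := ne_of_gt hh0
  have hco : IsCoprime (h:ℤ) (s - t) := Int.isCoprime_iff_gcd_eq_one.mpr hgcd
  have hst : ¬ (h:ℤ) ∣ (s - t) := by
    intro hd
    obtain ⟨a, b, hab⟩ := hco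
    obtain ⟨cc, hcc⟩ := hd
    have h1 : (h:ℤ) ∣ 1 := ⟨a + b * cc, by rw [← hab, hcc]; ring⟩
    have := Int.le_of_dvd one_pos h1
    omega
  have two_sum := two_sum_of_gaps hYgaps hX
  obtain ⟨x₀, x₀', hx₀, _, _⟩ := two_sum 0
  set c : ℤ := ((h:ℤ)-1)*s + t with hc
  have hsA : s ∈ A := by rw [hA]; exact Or.inl rfl
  have hXA : ∀ x ∈ X, (h:ℤ)*x + t ∈ A := fun x hx => by
    rw [hA]; exact Or.inr ⟨x, hx, rfl⟩
  have hdichA : ∀ u ∈ A, (h:ℤ) ∣ u - s ∨ (h:ℤ) ∣ u - t := by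
    intro u hu
    rw [hA] at hu
    rcases hu with hu | ⟨x, hx, rfl⟩
    · rw [Set.mem_singleton_iff] at hu; rw [hu]; exact Or.inl ⟨0, by ring⟩
    · exact Or.inr ⟨x, by ring⟩
  have hnotA : ∀ y ∈ Y, c + (h:ℤ)*y ∉ sumset h A := by
    intro y hy hmem
    obtain ⟨f, i₀, hfA, hfs, hft, hsum⟩ :=
      sumset_decomp hh hco hmem hdichA ⟨y, by rw [hc]; ring⟩
    have hfi : ∀ i, i ≠ i₀ → f i = s := by
      intro i hi
      have := hfA i
      rw [hA] at this
      rcases this with h1 | ⟨x, hx, h2⟩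
      · exact Set.mem_singleton_iff.mp h1
      · exfalso
        apply hst
        obtain ⟨w, hw⟩ := hfs i hi
        rw [h2] at hw
        exact ⟨x - w, by linear_combination -hw⟩
    have hfi₀ : ∃ x ∈ X, f i₀ = (h:ℤ)*x + t := by
      have := hfA i₀
      rw [hA] at this
      rcases this with h1 | ⟨x, hx, h2⟩
      · exfalso
        apply hst
        obtain ⟨w, hw⟩ := hft
        rw [Set.mem_singleton_iff.mp h1] at hw
        exact ⟨w, by linear_combination hw⟩
      · exact ⟨x, hx, h2⟩
    obtain ⟨x, hxX, hfx⟩ := hfi₀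
    have hsum2 : ∑ i, f i = f i₀ + ∑ i ∈ Finset.univ.erase i₀, f i :=
      (Finset.add_sum_erase _ f (Finset.mem_univ i₀)).symm
    have hsum3 : ∑ i ∈ Finset.univ.erase i₀, f i = ((h:ℤ) - 1) * s := by
      rw [Finset.sum_congr rfl (fun i hi => hfi i (Finset.ne_of_mem_erase hi)),
        Finset.sum_const, Finset.card_erase_of_mem (Finset.mem_univ _), Finset.card_univ,
        Fintype.card_fin, nsmul_eq_mul]
      have hcst : ((h - 1 : ℕ) : ℤ) = (h:ℤ) - 1 := by omega
      rw [hcst]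
    have hyx : y = x := by
      rw [hsum2, hsum3, hfx, hc] at hsum
      have hmul : (h:ℤ) * y = (h:ℤ) * x := by linarith
      exact mul_left_cancel₀ hhne hmul
    rw [hX] at hxX
    exact hxX (hyx ▸ hy)
  have hA1 : (sumset h A)ᶜ.Infinite := by
    have himg : (fun y => c + (h:ℤ)*y) '' Y ⊆ (sumset h A)ᶜ := by
      rintro _ ⟨y, hy, rfl⟩
      exact hnotA y hy
    have hinj : Set.InjOn (fun y => c + (h:ℤ)*y) Y := by
      intro a _ b _ hab
      simp only at hab
      have : (h:ℤ)*a = (h:ℤ)*b := by linarith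
      exact mul_left_cancel₀ hhne this
    exact Set.Infinite.mono himg (hYinf.image hinj)
  refine ⟨hA1, ?_⟩
  rintro ⟨M, hAM, hMnon, hMmax⟩
  have hsM : s ∈ M := hAM hsA
  have hXM : ∀ x ∈ X, (h:ℤ)*x + t ∈ M := fun x hx => hAM (hXA x hx)
  -- every element of M is ≡ s or ≡ t mod h
  have hdichM : ∀ u ∈ M, (h:ℤ) ∣ u - s ∨ (h:ℤ) ∣ u - t := by
    intro u hu
    by_contra hcon
    push_neg at hcon
    obtain ⟨hus, hut⟩ := hcon
    obtain ⟨n, hn⟩ := hMnon.nonempty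
    apply hn
    by_cases hcc : (h:ℤ) ∣ n - (((h:ℤ)-1)*s + t)
    · obtain ⟨aa, e, hab⟩ := hco
      set r : ℤ := ((t - u) * e) % h with hr
      have hr0 : 0 ≤ r := Int.emod_nonneg _ hhne
      have hrh : r < h := Int.emod_lt_of_pos _ hh0
      obtain ⟨q, hq⟩ : (h:ℤ) ∣ (t - u) * e - r := Int.dvd_self_sub_of_emod_eq rfl
      have hkey : (h:ℤ) ∣ (t - u) - r * (s - t) :=
        ⟨aa * (t - u) + q * (s - t), by linear_combination (s - t) * hq - (t - u) * hab⟩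
      have hrne0 : r ≠ 0 := by
        intro h0
        apply hut
        obtain ⟨w, hw⟩ := hkey
        rw [h0] at hw
        exact ⟨-w, by linear_combination -hw⟩
      have hrne1 : r ≠ (h:ℤ) - 1 := by
        intro h1
        apply hus
        obtain ⟨w, hw⟩ := hkey
        rw [h1] at hw
        exact ⟨-(w + (s - t)), by linear_combination -hw⟩
      set rn : ℕ := r.toNat with hrn
      have hrcast : (rn : ℤ) = r := Int.toNat_of_nonneg hr0
      have ha3 : (rn - 1) + 3 ≤ h := by omega
      apply cov_gen hsM hXM two_sum hx₀ hu (rn - 1) ha3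
      have hcast2 : ((rn - 1 : ℕ) : ℤ) = r - 1 := by omega
      rw [hcast2]
      obtain ⟨p, hp⟩ := hcc
      obtain ⟨q2, hq2⟩ := hkey
      exact ⟨p + q2 + (s - t), by linear_combination hp + hq2⟩
    · exact cov_class hh hco hsM hXM two_sum hx₀ hcc
  -- the exceptional set W
  set W : Set ℤ := {y : ℤ | c + (h:ℤ)*y ∉ sumset h M} with hWdef
  have hWmem : ∀ y : ℤ, y ∈ W ↔ c + (h:ℤ)*y ∉ sumset h M := fun y => Iff.rfl
  have hWinf : W.Infinite := by
    have hsub : (sumset h M)ᶜ ⊆ (fun y => c + (h:ℤ)*y) '' W := by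
      intro n hn
      have hdvd : (h:ℤ) ∣ n - (((h:ℤ)-1)*s + t) := by
        by_contra hc2
        exact hn (cov_class hh hco hsM hXM two_sum hx₀ hc2)
      obtain ⟨y, hy⟩ := hdvd
      have hne : n = c + (h:ℤ)*y := by rw [hc]; linarith
      refine ⟨y, ?_, hne.symm⟩
      rw [hWmem, ← hne]
      exact hn
    intro hWfin
    exact hMnon (Set.Finite.subset (Set.Finite.image _ hWfin) hsub)
  have hWt : ∀ y : ℤ, (h:ℤ)*y + t ∈ M → c + (h:ℤ)*y ∈ sumset h M := by
    intro y hyM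
    have m1 := mem_sumset_nsmul (mem_sumset_zero M) hsM (h - 1)
    have m2 := mem_sumset_add_s12 m1 hyM
    have hidx : 0 + (h - 1) + 1 = h := by omega
    rw [hidx] at m2
    have hcast : ((h - 1 : ℕ) : ℤ) = (h:ℤ) - 1 := by omega
    rw [hcast] at m2
    have heq : c + (h:ℤ)*y = 0 + ((h:ℤ)-1)*s + ((h:ℤ)*y + t) := by rw [hc]; ring
    rwa [heq]
  have hWZ : ∀ y ∈ W, (h:ℤ)*y + t ∉ M := fun y hy hmem => ((hWmem y).mp hy) (hWt y hmem)
  -- key decomposition consequence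
  have main : ∀ z ∈ W, ∀ y ∈ W, c + (h:ℤ)*y ∈ sumset h (M ∪ {(h:ℤ)*z + t}) →
      ∀ y' ∈ W, y' - (y - z) ∈ Y := by
    intro z hzW y hyW hmem y' hy'W
    have hdichMb : ∀ u ∈ M ∪ {(h:ℤ)*z + t}, (h:ℤ) ∣ u - s ∨ (h:ℤ) ∣ u - t := by
      rintro u (hu | hu)
      · exact hdichM u hu
      · rw [Set.mem_singleton_iff] at hu
        rw [hu]
        exact Or.inr ⟨z, by ring⟩
    obtain ⟨f, i₀, hfM, hfs, hft, hsum⟩ :=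
      sumset_decomp hh hco hmem hdichMb ⟨y, by rw [hc]; ring⟩
    have hfM' : ∀ i, i ≠ i₀ → f i ∈ M := by
      intro i hi
      rcases hfM i with hmem' | hmem'
      · exact hmem'
      · exfalso
        rw [Set.mem_singleton_iff] at hmem'
        obtain ⟨w, hw⟩ := hfs i hi
        rw [hmem'] at hw
        exact hst ⟨z - w, by linear_combination -hw⟩
    have hfi₀ : f i₀ = (h:ℤ)*z + t := by
      by_contra hne
      have hallM : ∀ i, f i ∈ M := by
        intro i
        by_cases hii : i = i₀
        · rcases hfM i with hm | hm
          · exact hm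
          · exfalso
            rw [Set.mem_singleton_iff] at hm
            rw [hii] at hm
            exact hne hm
        · exact hfM' i hii
      exact ((hWmem y).mp hyW) ⟨f, hallM, hsum⟩
    by_contra hnotY
    have hinX : y' - (y - z) ∈ X := by rw [hX]; exact hnotY
    have hbM : (h:ℤ)*(y' - (y - z)) + t ∈ M := hXM _ hinX
    apply (hWmem y').mp hy'W
    refine ⟨Function.update f i₀ ((h:ℤ)*(y' - (y - z)) + t), ?_, ?_⟩
    · intro i
      by_cases hii : i = i₀
      · rw [hii, Function.update_self]; exact hbM
      · rw [Function.update_of_ne hii]; exact hfM' i hii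
    · rw [Finset.sum_update_of_mem (Finset.mem_univ i₀)]
      have hrest : ∑ i ∈ Finset.univ \ {i₀}, f i = (c + (h:ℤ)*y) - ((h:ℤ)*z + t) := by
        have h5 := Finset.add_sum_erase Finset.univ f (Finset.mem_univ i₀)
        rw [Finset.erase_eq] at h5
        rw [hfi₀] at h5
        rw [← hsum] at h5
        linarith
      rw [hrest]
      ring
  -- choose two distinct elements of W
  obtain ⟨z₀, hz₀W⟩ := hWinf.nonempty
  obtain ⟨z₁, hz₁⟩ := (hWinf.diff (Set.finite_singleton z₀)).nonempty
  have hz₁W : z₁ ∈ W := hz₁.1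
  have hzne : z₁ ≠ z₀ := by simpa using hz₁.2
  have happly : ∀ z ∈ W, ∃ E : Set ℤ, E.Finite ∧ ∀ y ∈ W, y ∉ E →
      ∀ y' ∈ W, y' - (y - z) ∈ Y := by
    intro z hzW
    have hbnot : (h:ℤ)*z + t ∉ M := hWZ z hzW
    have hfinb := hMmax _ hbnot
    refine ⟨(fun y => c + (h:ℤ)*y) ⁻¹' (sumset h (M ∪ {(h:ℤ)*z + t}))ᶜ, ?_, ?_⟩
    · apply Set.Finite.preimage ?_ hfinb
      intro a _ b _ hab
      simp only at hab
      have : (h:ℤ)*a = (h:ℤ)*b := by linarith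
      exact mul_left_cancel₀ hhne this
    · intro y hyW hyE
      have hmem : c + (h:ℤ)*y ∈ sumset h (M ∪ {(h:ℤ)*z + t}) := by
        by_contra hcon
        exact hyE hcon
      exact main z hzW y hyW hmem
  obtain ⟨E₀, hE₀fin, hE₀⟩ := happly z₀ hz₀W
  obtain ⟨E₁, hE₁fin, hE₁⟩ := happly z₁ hz₁W
  obtain ⟨ys, hys⟩ := (hWinf.diff (hE₀fin.union hE₁fin)).nonempty
  have hysW : ys ∈ W := hys.1
  have hysE₀ : ys ∉ E₀ := fun hcon => hys.2 (Or.inl hcon)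
  have hysE₁ : ys ∉ E₁ := fun hcon => hys.2 (Or.inr hcon)
  set v₀ : ℤ := ys - z₀ with hv₀
  set v₁ : ℤ := ys - z₁ with hv₁
  have key₀ : ∀ y' ∈ W, y' - v₀ ∈ Y := fun y' hy' => hE₀ ys hysW hysE₀ y' hy'
  have key₁ : ∀ y' ∈ W, y' - v₁ ∈ Y := fun y' hy' => hE₁ ys hysW hysE₁ y' hy'
  have hvne : v₀ ≠ v₁ := by
    rw [hv₀, hv₁]
    intro hcon
    exact hzne (by linarith)
  have hCpos : 0 < |v₁ - v₀| := abs_pos.mpr (sub_ne_zero.mpr (Ne.symm hvne))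
  have hfinS := hYgaps |v₁ - v₀| hCpos
  have himg : (fun y => (y - v₀, y - v₁)) '' W ⊆
      {p : ℤ×ℤ | p.1 ∈ Y ∧ p.2 ∈ Y ∧ p.1 ≠ p.2 ∧ |p.1 - p.2| ≤ |v₁ - v₀|} := by
    rintro _ ⟨y, hy, rfl⟩
    refine ⟨key₀ y hy, key₁ y hy, ?_, ?_⟩
    · simp only
      intro hcon
      exact hvne (by linarith)
    · simp only
      have heq2 : (y - v₀) - (y - v₁) = v₁ - v₀ := by ring
      rw [heq2]
  have hinj : Set.InjOn (fun y => (y - v₀, y - v₁)) W := by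
    intro a _ b _ hab
    have := congrArg Prod.fst hab
    simp only at this
    linarith
  exact (hfinS.subset himg).not_infinite (hWinf.image hinj)
end

section
/- Let h ≥ 2 and let s, t be nonnegative integers with gcd(h, s−t) = 1. Let A = {s} ∪ {hz + t : z ∈ ℕ}. Then every integer n ≥ (h−1)|s−t| + ht belongs to hA; in particular, A is an asymptotic basis of order h for ℕ. -/
def sumsetN (h : ℕ) (A : Set ℕ) : Set ℕ :=
  {n | ∃ f : Fin h → ℕ, (∀ i, f i ∈ A) ∧ n = ∑ i, f i}

def InfiniteGapsN (Y : Set ℕ) : Prop :=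
  ∀ C : ℤ, 0 < C →
    {p : ℕ × ℕ | p.1 ∈ Y ∧ p.2 ∈ Y ∧ p.1 ≠ p.2 ∧ |(p.1 : ℤ) - p.2| ≤ C}.Finite

theorem stmt14 (h : ℕ) (hh : 2 ≤ h) (s t : ℕ)
    (hgcd : Int.gcd (h : ℤ) ((s : ℤ) - t) = 1)
    (A : Set ℕ) (hA : A = {s} ∪ {m : ℕ | ∃ z : ℕ, m = h * z + t}) :
    (∀ n : ℕ, (h - 1) * ((s : ℤ) - t).natAbs + h * t ≤ n → n ∈ sumsetN h A) ∧
    (sumsetN h A)ᶜ.Finite := by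
  have main : ∀ n : ℕ, (h - 1) * ((s : ℤ) - t).natAbs + h * t ≤ n → n ∈ sumsetN h A := by
    intro n hn
    set d : ℤ := (s : ℤ) - t with hd
    have hcop : IsCoprime (h : ℤ) d := Int.isCoprime_iff_gcd_eq_one.mpr hgcd
    obtain ⟨u, v, huv⟩ := hcop
    have hh0 : 0 < (h : ℤ) := by exact_mod_cast Nat.lt_of_lt_of_le two_pos hh
    set k : ℤ := (v * n) % h with hk
    have hk0 : 0 ≤ k := Int.emod_nonneg _ (by omega)
    have hkh : k < h := Int.emod_lt_of_pos _ hh0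
    set q : ℤ := (v * n) / h with hq
    have hkq : k = v * n - h * q := by rw [hk, hq, Int.emod_def]
    set w : ℤ := u * n + q * d - t with hw
    have hM : (n : ℤ) - h * t - k * d = h * w := by
      rw [hw]
      linear_combination -(n : ℤ) * huv - d * hkq
    -- nonnegativity of w
    have hcast : ((h - 1) * d.natAbs + h * t : ℕ) ≤ (n : ℤ) := by exact_mod_cast hn
    have hnn : ((h : ℤ) - 1) * |d| + h * t ≤ (n : ℤ) := by
      have h1 : ((h - 1 : ℕ) : ℤ) = (h : ℤ) - 1 := by
        have : 1 ≤ h := by omega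
        push_cast [this]; ring
      rw [Int.abs_eq_natAbs]
      push_cast at hcast ⊢
      rw [h1] at hcast
      exact_mod_cast hcast
    have hkd : k * d ≤ ((h : ℤ) - 1) * |d| := by
      have h2 : k * d ≤ k * |d| := mul_le_mul_of_nonneg_left (le_abs_self d) hk0
      have h3 : k * |d| ≤ ((h : ℤ) - 1) * |d| :=
        mul_le_mul_of_nonneg_right (by omega) (abs_nonneg d)
      linarith
    have hw0 : 0 ≤ w := by
      have : 0 ≤ (h : ℤ) * w := by rw [← hM]; linarith
      exact nonneg_of_mul_nonneg_right this hh0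
    set z : ℕ := w.toNat with hz
    have hzw : (z : ℤ) = w := Int.toNat_of_nonneg hw0
    set k0 : ℕ := k.toNat with hk0'
    have hk0k : (k0 : ℤ) = k := Int.toNat_of_nonneg hk0
    have hk0h : k0 < h := by omega
    refine ⟨fun i => (if (i : ℕ) < k0 then s else t) + h * (if (i : ℕ) = k0 then z else 0), ?_, ?_⟩
    · intro i
      rw [hA]
      by_cases hi : (i : ℕ) < k0
      · left
        have : (i : ℕ) ≠ k0 := Nat.ne_of_lt hi
        simp [hi, this]
      · right
        refine ⟨if (i : ℕ) = k0 then z else 0, ?_⟩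
        simp [hi, Nat.add_comm]
    · -- sum computation
      have hsum : ∑ i : Fin h,
          ((if (i : ℕ) < k0 then s else t) + h * (if (i : ℕ) = k0 then z else 0))
          = k0 * s + (h - k0) * t + h * z := by
        rw [Finset.sum_add_distrib, ← Finset.mul_sum]
        have e1 : ∑ i : Fin h, (if (i : ℕ) < k0 then s else t) = k0 * s + (h - k0) * t := by
          rw [Fin.sum_univ_eq_sum_range (fun x => if x < k0 then s else t) h]
          rw [Finset.range_eq_Ico, ← Finset.sum_Ico_consecutive _ (Nat.zero_le k0) (le_of_lt hk0h)]
          rw [Finset.sum_congr rfl (fun x hx => if_pos (Finset.mem_Ico.mp hx).2),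
            Finset.sum_congr rfl (fun x hx => if_neg (by simpa using Nat.not_lt.mpr (Finset.mem_Ico.mp hx).1))]
          simp [Nat.card_Ico, mul_comm]
        have e2 : ∑ i : Fin h, (if (i : ℕ) = k0 then z else 0) = z := by
          rw [Fin.sum_univ_eq_sum_range (fun x => if x = k0 then z else 0) h]
          rw [Finset.sum_ite_eq' (Finset.range h) k0 (fun _ => z)]
          simp [hk0h]
        rw [e1, e2]
      rw [hsum]
      have : (n : ℤ) = k0 * s + ((h : ℤ) - k0) * t + h * z := by
        rw [hzw, hk0k]
        linear_combination hM + k * hd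
      have hfin : ((k0 * s + (h - k0) * t + h * z : ℕ) : ℤ) = (n : ℤ) := by
        push_cast [Nat.cast_sub (le_of_lt hk0h)]
        linarith [this]
      exact_mod_cast hfin.symm
  refine ⟨main, ?_⟩
  apply (Set.finite_Iio ((h - 1) * ((s : ℤ) - t).natAbs + h * t)).subset
  intro n hn
  simp only [Set.mem_compl_iff] at hn
  by_contra hlt
  exact hn (main n (by simpa [Set.mem_Iio, Nat.not_lt] using hlt))
end

section
/- Let h ≥ 2 and let s, t be nonnegative integers with gcd(h, s−t) = 1. Let A = {s} ∪ {hz + t : z ∈ ℕ}. If n ∈ ℕ satisfies n ≡ t − s (mod h) and n ≥ (h−1)s + t, then there exists a unique z₁ ∈ ℕ with n = (h−1)s + (hz₁ + t), and this is the unique representation of n as a sum of h elements of A. -/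
/-!
Every element of `A` other than `s` is `≡ t (mod h)`. If a representation of `n` uses `s`
exactly `k` times, its sum is `≡ k s + (h - k) t ≡ k (s - t)`, while `n ≡ -(s - t)`; as `s - t`
is invertible mod `h`, this gives `h ∣ k + 1`, hence `k = h - 1`. The one remaining summand is
then `n - (h - 1) s`, which lies in `A` because `n ≡ (h - 1) s + t (mod h)`.
-/

namespace Multiset

variable {α : Type*} [DecidableEq α]

theorem replicate_count_add_filter_ne (m : Multiset α) (a : α) :
    replicate (m.count a) a + m.filter (· ≠ a) = m := by
  rw [← filter_eq', filter_add_not]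

theorem exists_eq_replicate_count_add_singleton {m : Multiset α} {a : α}
    (h : m.count a + 1 = card m) : ∃ b, m = replicate (m.count a) a + {b} := by
  have hsplit := replicate_count_add_filter_ne m a
  obtain ⟨b, hb⟩ := card_eq_one.mp (show card (m.filter (· ≠ a)) = 1 by
    have := congrArg card hsplit
    rw [card_add, card_replicate] at this
    omega)
  exact ⟨b, by rw [← hb, hsplit]⟩

theorem natCast_sum_eq_card_mul {R : Type*} [Semiring R] {m : Multiset ℕ} {r : R}
    (hm : ∀ a ∈ m, (a : R) = r) : (m.sum : R) = card m * r := by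
  rw [Nat.cast_multiset_sum, eq_replicate_of_mem (s := m.map _) (by simpa using hm),
    sum_replicate, card_map, nsmul_eq_mul]

end Multiset

open Multiset

section Representation

variable {h s t : ℕ}

theorem dvd_count_add_one (hst : IsUnit ((s : ZMod h) - t)) {m : Multiset ℕ}
    (hcard : card m = h) (hm : ∀ a ∈ m, a ≠ s → (a : ZMod h) = t)
    (hsum : (m.sum : ZMod h) = t - s) : h ∣ m.count s + 1 := by
  set rest := m.filter (· ≠ s)
  have hsplit := replicate_count_add_filter_ne m s
  have hrest : (rest.sum : ZMod h) = card rest * t :=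
    natCast_sum_eq_card_mul fun a ha ↦ hm a (mem_filter.mp ha).1 (mem_filter.mp ha).2
  have hcard' : (m.count s : ZMod h) + card rest = 0 := by
    rw [← Nat.cast_add, ← card_replicate (m.count s) s, ← card_add, hsplit, hcard,
      ZMod.natCast_self]
  have hsum' : (m.sum : ZMod h) = m.count s * s + card rest * t := by
    conv_lhs => rw [← hsplit]
    rw [sum_add, Nat.cast_add, hrest, sum_replicate, smul_eq_mul, Nat.cast_mul]
  have hzero : ((m.count s + 1 : ℕ) : ZMod h) * (s - t) = 0 := by
    push_cast
    linear_combination hsum - hsum' - (t : ZMod h) * hcard'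
  rw [← ZMod.natCast_eq_zero_iff]
  exact hst.mul_left_eq_zero.mp hzero

theorem exists_eq_sub_one_mul_add_mul_add (hh : 0 < h) {n : ℕ} (hn : (n : ZMod h) = t - s)
    (hle : (h - 1) * s + t ≤ n) : ∃ z, n = (h - 1) * s + (h * z + t) := by
  have hmod : (h - 1) * s + t ≡ n [MOD h] := by
    rw [← ZMod.natCast_eq_natCast_iff, hn]
    push_cast [Nat.cast_sub hh, ZMod.natCast_self]
    ring
  obtain ⟨z, hz⟩ := (Nat.modEq_iff_dvd' hle).mp hmod
  exact ⟨z, by omega⟩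

end Representation

theorem stmt15 (h : ℕ) (hh : 2 ≤ h) (s t : ℕ)
    (hgcd : Int.gcd (h : ℤ) ((s : ℤ) - t) = 1)
    (A : Set ℕ) (hA : A = {s} ∪ {m : ℕ | ∃ z : ℕ, m = h * z + t})
    (n : ℕ) (hn : (n : ℤ) ≡ (t : ℤ) - s [ZMOD (h : ℤ)]) (hn2 : (h - 1) * s + t ≤ n) :
    ∃! z₁ : ℕ, n = (h - 1) * s + (h * z₁ + t) ∧
      ∀ m : Multiset ℕ, Multiset.card m = h → (∀ a ∈ m, a ∈ A) → m.sum = n →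
        m = Multiset.replicate (h - 1) s + {h * z₁ + t} := by
  have hpos : 0 < h := by omega
  have hnZ : (n : ZMod h) = t - s := by
    simpa using (ZMod.intCast_eq_intCast_iff _ _ _).mpr hn
  have hst : IsUnit ((s : ZMod h) - t) := by
    simpa using (ZMod.coe_int_isUnit_iff_isCoprime ((s : ℤ) - t) h).mpr
      (Int.isCoprime_iff_gcd_eq_one.mpr hgcd)
  obtain ⟨z₁, hz₁⟩ := exists_eq_sub_one_mul_add_mul_add hpos hnZ hn2
  refine ⟨z₁, ⟨hz₁, fun m hcard hmA hsum ↦ ?_⟩,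
    fun z hz ↦ Nat.eq_of_mul_eq_mul_left hpos (by linarith [hz.1])⟩
  have hm : ∀ a ∈ m, a ≠ s → (a : ZMod h) = t := by
    intro a ha has
    obtain ⟨z, rfl⟩ : ∃ z, a = h * z + t := by simpa [hA, has] using hmA a ha
    simp
  have hk : m.count s = h - 1 := by
    have hdvd := dvd_count_add_one hst hcard hm (hsum ▸ hnZ)
    have := count_le_card s m
    have := Nat.eq_of_dvd_of_lt_two_mul (by omega) hdvd (by omega)
    omega
  obtain ⟨a, ha⟩ := exists_eq_replicate_count_add_singleton (m := m) (a := s) (by omega)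
  rw [hk] at ha
  rw [ha, sum_add, sum_replicate, sum_singleton, smul_eq_mul] at hsum
  rw [ha, show a = h * z₁ + t by linarith]
end

section
/- Let h ≥ 2, let s, t be nonnegative integers with gcd(h, s−t) = 1, let Y₀ ⊆ ℕ be infinite with infinite gaps, and let X₀ = ℕ \ Y₀, A = {s} ∪ {hx + t : x ∈ X₀}. Then there is a finite set F ⊆ ℕ with F ∩ {(h−1)s + hy + t : y ∈ Y₀} = ∅ such that ℕ \ hA = F ∪ {(h−1)s + hy + t : y ∈ Y₀}; in particular, A is an asymptotic nonbasis of order h for ℕ. -/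
lemma mem_sumsetN_add {a b : ℕ} {A : Set ℕ} {x y : ℕ}
    (hx : x ∈ sumsetN a A) (hy : y ∈ sumsetN b A) : x + y ∈ sumsetN (a + b) A := by
  obtain ⟨f, hf, rfl⟩ := hx
  obtain ⟨g, hg, rfl⟩ := hy
  refine ⟨Fin.addCases f g, ?_, ?_⟩
  · intro i
    refine Fin.addCases (motive := fun i => Fin.addCases f g i ∈ A) ?_ ?_ i <;>
      intro j <;> simp [hf, hg]
  · rw [Fin.sum_univ_add]
    simp

lemma const_mem_sumsetN {k : ℕ} {A : Set ℕ} {s : ℕ} (hs : s ∈ A) : k * s ∈ sumsetN k A :=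
  ⟨fun _ => s, fun _ => hs, by simp [Finset.sum_const, mul_comm]⟩

lemma single_mem_sumsetN {A : Set ℕ} {m : ℕ} (hm : m ∈ A) : m ∈ sumsetN 1 A :=
  ⟨fun _ => m, fun _ => hm, by simp⟩

lemma shift_mem_sumsetN {j m h t : ℕ} {X A : Set ℕ} (hm : m ∈ sumsetN j X)
    (hXA : ∀ x ∈ X, h * x + t ∈ A) : h * m + j * t ∈ sumsetN j A := by
  obtain ⟨g, hg, rfl⟩ := hm
  refine ⟨fun i => h * g i + t, fun i => hXA _ (hg i), ?_⟩
  rw [Finset.sum_add_distrib, ← Finset.mul_sum]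
  simp [mul_comm]

lemma two_cofinite {Y : Set ℕ} (hY : InfiniteGapsN Y) :
    ∃ M : ℕ, ∀ m, M ≤ m → m ∈ sumsetN 2 Yᶜ := by
  have hfin := hY 2 (by norm_num)
  obtain ⟨N, hN⟩ := (hfin.image Prod.fst).bddAbove
  have key : ∀ a b : ℕ, N < a → a ∈ Y → b ∈ Y →
      (a : ℤ) - b ≤ 2 → (b : ℤ) - a ≤ 2 → a = b := by
    intro a b hNa ha hb h1 h2
    by_contra hne
    have : a ≤ N := hN ⟨(a, b), ⟨ha, hb, hne, abs_le.mpr ⟨by linarith, by linarith⟩⟩, rfl⟩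
    omega
  refine ⟨2 * N + 8, ?_⟩
  intro m hm
  have hex : ∃ a, N < a ∧ a + 4 ≤ m ∧ a ∉ Y ∧ m - a ∉ Y := by
    by_cases A1 : N + 1 ∈ Y
    · have A2 : N + 2 ∉ Y := fun A2 => by
        have := key _ _ (by omega) A1 A2 (by omega) (by omega); omega
      have A3 : N + 3 ∉ Y := fun A3 => by
        have := key _ _ (by omega) A1 A3 (by omega) (by omega); omega
      by_cases B2 : m - (N + 2) ∈ Y
      · have B3 : m - (N + 3) ∉ Y := fun B3 => by
          have := key _ _ (by omega) B2 B3 (by omega) (by omega); omega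
        exact ⟨N + 3, by omega, by omega, A3, B3⟩
      · exact ⟨N + 2, by omega, by omega, A2, B2⟩
    · by_cases B1 : m - (N + 1) ∈ Y
      · have B2 : m - (N + 2) ∉ Y := fun B2 => by
          have := key _ _ (by omega) B1 B2 (by omega) (by omega); omega
        by_cases A2 : N + 2 ∈ Y
        · have A3 : N + 3 ∉ Y := fun A3 => by
            have := key _ _ (by omega) A2 A3 (by omega) (by omega); omega
          have B3 : m - (N + 3) ∉ Y := fun B3 => by
            have := key _ _ (by omega) B1 B3 (by omega) (by omega); omega
          exact ⟨N + 3, by omega, by omega, A3, B3⟩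
        · exact ⟨N + 2, by omega, by omega, A2, B2⟩
      · exact ⟨N + 1, by omega, by omega, A1, B1⟩
  obtain ⟨a, hNa, ham, ha, hb⟩ := hex
  refine ⟨![a, m - a], ?_, ?_⟩
  · intro i; fin_cases i
    · exact ha
    · exact hb
  · rw [Fin.sum_univ_two]
    simp only [Matrix.cons_val_zero, Matrix.cons_val_one, Matrix.head_cons]
    omega

lemma ge_two_cofinite {Y : Set ℕ} {M x₀ : ℕ} (hx₀ : x₀ ∈ Yᶜ)
    (hM : ∀ m, M ≤ m → m ∈ sumsetN 2 Yᶜ) :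
    ∀ j, 2 ≤ j → ∀ m, M + j * x₀ ≤ m → m ∈ sumsetN j Yᶜ := by
  intro j hj m hm
  have hle : (j - 2) * x₀ ≤ j * x₀ := Nat.mul_le_mul_right _ (by omega)
  have h1 : m - (j - 2) * x₀ ∈ sumsetN 2 Yᶜ := hM _ (by omega)
  have h2 : (j - 2) * x₀ ∈ sumsetN (j - 2) Yᶜ := const_mem_sumsetN hx₀
  have h3 := mem_sumsetN_add h1 h2
  rw [show 2 + (j - 2) = j by omega, show m - (j-2)*x₀ + (j-2)*x₀ = m by omega] at h3
  exact h3
lemma rep_forward {h s t : ℕ} {X A : Set ℕ}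
    (hA : A = {s} ∪ {m : ℕ | ∃ x ∈ X, m = h * x + t}) :
    ∀ j n, n ∈ sumsetN j A →
      ∃ k m : ℕ, k ≤ j ∧ n = k * s + (j - k) * t + h * m ∧
        (j - k = 0 → m = 0) ∧ (j - k = 1 → m ∈ X) := by
  intro j
  induction j with
  | zero =>
    rintro n ⟨f, hf, rfl⟩
    exact ⟨0, 0, le_refl _, by simp, fun _ => rfl, by omega⟩
  | succ j ih =>
    rintro n ⟨f, hf, rfl⟩
    obtain ⟨k, m, hk, heq, h0, h1⟩ :=
      ih (∑ i : Fin j, f i.succ) ⟨fun i => f i.succ, fun i => hf _, rfl⟩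
    rw [Fin.sum_univ_succ]
    have hf0 := hf 0
    rw [hA] at hf0
    rcases hf0 with h0' | ⟨x, hx, hfx⟩
    · -- f 0 = s
      have hf0s : f 0 = s := h0'
      refine ⟨k + 1, m, by omega, ?_, ?_, ?_⟩
      · rw [hf0s, heq, show j + 1 - (k + 1) = j - k by omega]; ring
      · intro hz; exact h0 (by omega)
      · intro hz; exact h1 (by omega)
    · refine ⟨k, m + x, by omega, ?_, ?_, ?_⟩
      · rw [hfx, heq, show j + 1 - k = (j - k) + 1 by omega]; ring
      · intro hz; omega
      · intro hz
        have hm0 : m = 0 := h0 (by omega)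
        rw [hm0, zero_add]; exact hx
theorem stmt16 (h : ℕ) (hh : 2 ≤ h) (s t : ℕ)
    (hgcd : Int.gcd (h : ℤ) ((s : ℤ) - t) = 1)
    (Y₀ : Set ℕ) (hYinf : Y₀.Infinite) (hYgaps : InfiniteGapsN Y₀)
    (X₀ : Set ℕ) (hX : X₀ = Y₀ᶜ)
    (A : Set ℕ) (hA : A = {s} ∪ {m : ℕ | ∃ x ∈ X₀, m = h * x + t}) :
    (∃ F : Set ℕ, F.Finite ∧
      F ∩ {m : ℕ | ∃ y ∈ Y₀, m = (h - 1) * s + h * y + t} = ∅ ∧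
      (sumsetN h A)ᶜ = F ∪ {m : ℕ | ∃ y ∈ Y₀, m = (h - 1) * s + h * y + t}) ∧
    (sumsetN h A)ᶜ.Infinite := by
  have hh0 : 0 < h := by omega
  have hcop : IsCoprime (h : ℤ) ((s : ℤ) - t) := Int.isCoprime_iff_gcd_eq_one.mpr hgcd
  set S : Set ℕ := {m : ℕ | ∃ y ∈ Y₀, m = (h - 1) * s + h * y + t} with hSdef
  -- S is disjoint from the sumset
  have hSA : ∀ n ∈ S, n ∉ sumsetN h A := by
    rintro n ⟨y, hy, rfl⟩ hn
    obtain ⟨k, m, hk, heq, h0c, h1c⟩ := rep_forward hA h _ hn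
    zify [hk, show 1 ≤ h by omega] at heq
    have hEq2 : ((k : ℤ) + 1 - h) * ((s : ℤ) - t) = (h : ℤ) * ((y : ℤ) - m) := by
      linear_combination -heq
    have hdvd2 : (h : ℤ) ∣ ((k : ℤ) + 1 - h) := hcop.dvd_of_dvd_mul_right ⟨_, hEq2⟩
    obtain ⟨c, hc⟩ := hdvd2
    have hc0 : c = 0 := by
      rcases lt_trichotomy c 0 with hlt | he | hgt
      · have h1 : (h : ℤ) * c ≤ (h : ℤ) * (-1) :=
          mul_le_mul_of_nonneg_left (by omega) (by positivity)
        have hkh : (k : ℤ) ≤ h := by exact_mod_cast hk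
        have hh2 : (2 : ℤ) ≤ h := by exact_mod_cast hh
        linarith
      · exact he
      · have h1 : (h : ℤ) * 1 ≤ (h : ℤ) * c :=
          mul_le_mul_of_nonneg_left (by omega) (by positivity)
        have hkh : (k : ℤ) ≤ h := by exact_mod_cast hk
        have hh2 : (2 : ℤ) ≤ h := by exact_mod_cast hh
        linarith
    rw [hc0, mul_zero] at hc
    have hkeq : k = h - 1 := by omega
    have hym : (y : ℤ) - m = 0 := by
      rw [hc, zero_mul] at hEq2
      rcases mul_eq_zero.mp hEq2.symm with h' | h'
      · exact absurd h' (by positivity)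
      · exact h'
    have hym' : y = m := by omega
    have hmX : m ∈ X₀ := h1c (by omega)
    rw [hX] at hmX
    exact hmX (hym' ▸ hy)
  -- cofiniteness machinery
  obtain ⟨M₂, hM₂⟩ := two_cofinite hYgaps
  obtain ⟨g, hg, -⟩ := hM₂ M₂ le_rfl
  set x₀ : ℕ := g 0 with hx₀def
  have hx₀ : x₀ ∈ Y₀ᶜ := hg 0
  obtain ⟨a, b, hab⟩ := hcop
  have hsA : s ∈ A := by rw [hA]; exact Or.inl rfl
  have hXA : ∀ x ∈ X₀, h * x + t ∈ A := fun x hx => by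
    rw [hA]; exact Or.inr ⟨x, hx, rfl⟩
  set N : ℕ := h * s + h * t + h * (M₂ + h * x₀) + h with hNdef
  have hlarge : ∀ n, N ≤ n → n ∉ S → n ∈ sumsetN h A := by
    intro n hn hnS
    set kz : ℤ := (b * n) % h with hkzdef
    have hk0 : 0 ≤ kz := Int.emod_nonneg _ (by exact_mod_cast hh0.ne')
    have hkhz : kz < h := Int.emod_lt_of_pos _ (by exact_mod_cast hh0)
    set k : ℕ := kz.toNat with hkdef
    have hkk : (k : ℤ) = kz := Int.toNat_of_nonneg hk0
    have hkh' : k < h := by omega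
    have hd1 : (h : ℤ) ∣ b * n - kz := by
      refine ⟨(b * n) / h, ?_⟩
      have := Int.mul_ediv_add_emod (b * n) (h : ℤ)
      rw [hkzdef]; linarith
    have hd2 : (h : ℤ) ∣ (n : ℤ) - (k : ℤ) * s - ((h : ℤ) - k) * t := by
      have key : (n : ℤ) - (k : ℤ) * s - ((h : ℤ) - k) * t =
          (h : ℤ) * (a * n - t) + (b * n - kz) * ((s : ℤ) - t) := by
        rw [hkk]; linear_combination -(n : ℤ) * hab
      rw [key]
      exact dvd_add (dvd_mul_right _ _) (hd1.mul_right _)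
    obtain ⟨c, hc⟩ := hd2
    have hks : (k : ℤ) * s ≤ (h : ℤ) * s :=
      mul_le_mul_of_nonneg_right (by exact_mod_cast hkh'.le) (by positivity)
    have hts : ((h : ℤ) - k) * t ≤ (h : ℤ) * t :=
      mul_le_mul_of_nonneg_right (by omega) (by positivity)
    have hn' : (N : ℤ) ≤ n := by exact_mod_cast hn
    have hNz : (N : ℤ) = h * s + h * t + h * (M₂ + h * x₀) + h := by
      rw [hNdef]; push_cast; ring
    have hb1 : (h : ℤ) * ((M₂ : ℤ) + h * x₀) ≤ (h : ℤ) * c := by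
      rw [← hc]
      have hh2 : (0 : ℤ) < h := by exact_mod_cast hh0
      linarith [hNz ▸ hn']
    have hcge : ((M₂ : ℤ) + h * x₀) ≤ c :=
      le_of_mul_le_mul_left hb1 (by exact_mod_cast hh0)
    have hc0 : 0 ≤ c := le_trans (by positivity) hcge
    set m : ℕ := c.toNat with hmdef
    have hmc : (m : ℤ) = c := Int.toNat_of_nonneg hc0
    have hrep : n = k * s + (h - k) * t + h * m := by
      have h2 : ((k * s + (h - k) * t + h * m : ℕ) : ℤ) = (n : ℤ) := by
        push_cast [Nat.cast_sub hkh'.le]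
        rw [hmc]; linarith
      exact (Nat.cast_inj.mp h2).symm
    have hmge : M₂ + h * x₀ ≤ m := by
      have : ((M₂ + h * x₀ : ℕ) : ℤ) ≤ (m : ℤ) := by push_cast; rw [hmc]; exact hcge
      exact_mod_cast this
    by_cases hkcase : k = h - 1
    · have hmX : m ∈ X₀ := by
        rw [hX]
        intro hmY
        refine hnS ⟨m, hmY, ?_⟩
        rw [hrep, hkcase, show h - (h - 1) = 1 by omega]; ring
      have hm1 : h * m + 1 * t ∈ sumsetN 1 A :=
        shift_mem_sumsetN (single_mem_sumsetN hmX) hXA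
      have hks1 : (h - 1) * s ∈ sumsetN (h - 1) A := const_mem_sumsetN hsA
      have hadd := mem_sumsetN_add hks1 hm1
      rw [show h - 1 + 1 = h by omega] at hadd
      rwa [show (h-1) * s + (h * m + 1 * t) = n by
        rw [hrep, hkcase, show h - (h - 1) = 1 by omega]; ring] at hadd
    · have hj : 2 ≤ h - k := by omega
      have hmm : m ∈ sumsetN (h - k) X₀ := by
        rw [hX]
        refine ge_two_cofinite hx₀ hM₂ _ hj _ ?_
        have : (h - k) * x₀ ≤ h * x₀ := Nat.mul_le_mul_right _ (by omega)
        omega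
      have hadd := mem_sumsetN_add (const_mem_sumsetN (k := k) hsA)
        (shift_mem_sumsetN hmm hXA)
      rw [show k + (h - k) = h by omega] at hadd
      rwa [show k * s + (h * m + (h - k) * t) = n by rw [hrep]; ring] at hadd
  -- assemble
  have hsub : S ⊆ (sumsetN h A)ᶜ := fun n hn => hSA n hn
  constructor
  · refine ⟨(sumsetN h A)ᶜ \ S, ?_, ?_, ?_⟩
    · apply Set.Finite.subset (Set.finite_Iio N)
      rintro n ⟨hn1, hn2⟩
      by_contra hlt
      exact hn1 (hlarge n (le_of_not_gt hlt) hn2)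
    · ext n
      simp only [Set.mem_inter_iff, Set.mem_diff, Set.mem_empty_iff_false, iff_false,
        not_and]
      tauto
    · rw [Set.diff_union_self, Set.union_eq_self_of_subset_right hsub]
  · refine Set.Infinite.mono hsub ?_
    have hSim : S = (fun y => (h - 1) * s + h * y + t) '' Y₀ := by
      ext n
      simp only [hSdef, Set.mem_setOf_eq, Set.mem_image]
      constructor
      · rintro ⟨y, hy, rfl⟩; exact ⟨y, hy, rfl⟩
      · rintro ⟨y, hy, rfl⟩; exact ⟨y, hy, rfl⟩
    rw [hSim]
    refine Set.Infinite.image ?_ hYinf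
    intro y1 _ y2 _ he
    have : h * y1 = h * y2 := by
      have h1 : (h-1)*s + h*y1 + t = (h-1)*s + h*y2 + t := he
      omega
    exact Nat.eq_of_mul_eq_mul_left hh0 this
end

section
/- Let h ≥ 2, let s, t be nonnegative integers with gcd(h, s−t) = 1, let Y₀ ⊆ ℕ be infinite with infinite gaps, X₀ = ℕ \ Y₀, and A = {s} ∪ {hx + t : x ∈ X₀}. If b ∈ ℕ \ A satisfies b ≢ s (mod h) and b ≢ t (mod h), then A ∪ {b} is an asymptotic basis of order h for ℕ. -/
lemma List.sum_mem_sumsetN {h : ℕ} {S : Set ℕ} {l : List ℕ} (hl : l.length = h)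
    (hS : ∀ a ∈ l, a ∈ S) : l.sum ∈ sumsetN h S := by
  subst hl
  exact ⟨fun i => l[i], fun i => hS _ (List.getElem_mem _), (Fin.sum_univ_getElem l).symm⟩

lemma InfiniteGapsN.eventually_sparse {Y : Set ℕ} (hY : InfiniteGapsN Y) :
    ∃ D, ∀ u ∈ Y, D < u → ∀ v, u < v → v ≤ u + 2 → v ∉ Y := by
  obtain ⟨D, hD⟩ := ((hY 2 two_pos).image Prod.fst).bddAbove
  refine ⟨D, fun u hu hDu v huv hvu hv =>
    hDu.not_ge (hD ⟨(u, v), ⟨hu, hv, huv.ne, ?_⟩, rfl⟩)⟩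
  rw [abs_le]
  omega

lemma InfiniteGapsN.exists_add_eq_of_le {Y : Set ℕ} (hY : InfiniteGapsN Y) :
    ∃ N, ∀ M ≥ N, ∃ x ∈ Yᶜ, ∃ y ∈ Yᶜ, x + y = M := by
  obtain ⟨D, hD⟩ := hY.eventually_sparse
  refine ⟨2 * D + 4, fun M hM => ?_⟩
  by_contra! hM'
  -- among `D + 1, D + 2, D + 3` and among their complements to `M`, at most one lies in `Y`
  have hbad : ∀ i < 3, D + 1 + i ∈ Y ∨ M - (D + 1 + i) ∈ Y := fun i hi => by
    by_contra! hi'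
    exact hM' _ hi'.1 _ hi'.2 (by omega)
  rcases hbad 0 (by omega) with h0 | h0 <;> rcases hbad 1 (by omega) with h1 | h1 <;>
    rcases hbad 2 (by omega) with h2 | h2
  all_goals first
    | exact hD _ h0 (by omega) _ (by omega) (by omega) h1
    | exact hD _ h0 (by omega) _ (by omega) (by omega) h2
    | exact hD _ h1 (by omega) _ (by omega) (by omega) h2
    | exact hD _ h1 (by omega) _ (by omega) (by omega) h0
    | exact hD _ h2 (by omega) _ (by omega) (by omega) h0
    | exact hD _ h2 (by omega) _ (by omega) (by omega) h1

lemma ZMod.neg_natCast_sub_val {n : ℕ} [NeZero n] (a : ZMod n) :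
    -((n - a.val : ℕ) : ZMod n) = a := by
  rw [Nat.cast_sub a.val_lt.le, ZMod.natCast_self, ZMod.natCast_zmod_val]
  ring

lemma ZMod.exists_natCast_mul_or_natCast_mul_add {n : ℕ} [NeZero n] {c d : ZMod n}
    (hd : IsUnit d) (hc : c ≠ 0) (hcd : c ≠ d) (r : ZMod n) :
    (∃ j : ℕ, j + 2 ≤ n ∧ (j : ZMod n) * d = r) ∨
      ∃ j : ℕ, j + 3 ≤ n ∧ (j : ZMod n) * d + c = r := by
  obtain ⟨u, rfl⟩ := hd
  have hval : ∀ a : ZMod n, (a.val : ZMod n) * u = a * u := fun a => by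
    rw [ZMod.natCast_zmod_val]
  set a := r * (↑u⁻¹ : ZMod n) with ha
  set a' := (r - c) * (↑u⁻¹ : ZMod n) with ha'
  by_cases hj : a.val + 2 ≤ n
  · exact Or.inl ⟨_, hj, by rw [hval, ha]; simp⟩
  -- otherwise `a = -1`, i.e. `r = -u`, and then `a'` is neither `-1` nor `-2`
  have hr : r = -u := by
    have h1 : n - a.val = 1 := by have := a.val_lt; omega
    have := (ZMod.neg_natCast_sub_val a).symm
    rw [h1, ha, Units.mul_inv_eq_iff_eq_mul] at this
    simpa using this
  refine Or.inr ⟨a'.val, ?_, by rw [hval, ha']; simp⟩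
  have key := (ZMod.neg_natCast_sub_val a').symm
  rw [ha', Units.mul_inv_eq_iff_eq_mul] at key
  have hlt := a'.val_lt
  by_contra hle
  obtain h1 | h2 : n - a'.val = 1 ∨ n - a'.val = 2 := by omega
  · rw [h1, Nat.cast_one] at key
    exact hc (by linear_combination hr - key)
  · rw [h2, Nat.cast_two] at key
    exact hcd (by linear_combination hr - key)

lemma exists_modEq_of_isCoprime {h s t b : ℕ} (hh : h ≠ 0)
    (hgcd : Int.gcd (h : ℤ) ((s : ℤ) - t) = 1)
    (hbs : ¬ (b : ℤ) ≡ (s : ℤ) [ZMOD (h : ℤ)])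
    (hbt : ¬ (b : ℤ) ≡ (t : ℤ) [ZMOD (h : ℤ)]) (n : ℕ) :
    ∃ j ε k : ℕ, j + ε + k + 2 = h ∧ j * s + ε * b + (k + 2) * t ≡ n [MOD h] := by
  have : NeZero h := ⟨hh⟩
  have hunit : IsUnit ((s : ZMod h) - t) := by
    have hcop : IsCoprime ((s : ℤ) - t) h := by
      rw [Int.isCoprime_iff_gcd_eq_one, Int.gcd_comm, hgcd]
    simpa using (ZMod.unitOfIsCoprime _ hcop).isUnit
  have hbt' : (b : ZMod h) - t ≠ 0 := by
    rw [sub_ne_zero, ← Int.cast_natCast, ← Int.cast_natCast (R := ZMod h) t]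
    rwa [Ne, ZMod.intCast_eq_intCast_iff]
  have hbs' : (b : ZMod h) - t ≠ s - t := by
    rw [Ne, sub_left_inj, ← Int.cast_natCast, ← Int.cast_natCast (R := ZMod h) s]
    rwa [ZMod.intCast_eq_intCast_iff]
  obtain ⟨j, ε, hjε, hr⟩ : ∃ j ε : ℕ, j + ε + 2 ≤ h ∧
      (j : ZMod h) * (s - t) + ε * (b - t) = n := by
    rcases ZMod.exists_natCast_mul_or_natCast_mul_add hunit hbt' hbs' n with
      ⟨j, hj, hr⟩ | ⟨j, hj, hr⟩
    exacts [⟨j, 0, by omega, by simpa⟩, ⟨j, 1, by omega, by simpa⟩]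
  obtain ⟨k, hk⟩ : ∃ k, j + ε + k + 2 = h := ⟨h - j - ε - 2, by omega⟩
  have hk' : ((j + ε + k + 2 : ℕ) : ZMod h) = 0 := by rw [hk, ZMod.natCast_self]
  refine ⟨j, ε, k, hk, ?_⟩
  rw [← ZMod.natCast_eq_natCast_iff]
  push_cast at hk' ⊢
  linear_combination hr + (t : ZMod h) * hk'

lemma compl_sumsetN_finite_of_forall_modEq {h s t b N : ℕ} {X : Set ℕ}
    (hX : ∀ M ≥ N, ∃ x ∈ X, ∃ y ∈ X, x + y = M)
    (hres : ∀ n : ℕ, ∃ j ε k : ℕ,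
      j + ε + k + 2 = h ∧ j * s + ε * b + (k + 2) * t ≡ n [MOD h]) :
    (sumsetN h ({s} ∪ {m | ∃ x ∈ X, m = h * x + t} ∪ {b}))ᶜ.Finite := by
  obtain ⟨x₀, hx₀, -⟩ := hX N le_rfl
  refine (Set.finite_Iio (h * (s + b + t + h * x₀ + N))).subset fun n hn => ?_
  by_contra hlarge
  apply hn
  obtain ⟨j, ε, k, hh, hmod⟩ := hres n
  have hbound : j * s + ε * b + (k + 2) * t + h * (k * x₀ + N) ≤ n := by
    simp only [Set.mem_Iio, not_lt] at hlarge
    calc j * s + ε * b + (k + 2) * t + h * (k * x₀ + N)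
        ≤ h * s + h * b + h * t + h * (h * x₀ + N) := by gcongr <;> omega
      _ = h * (s + b + t + h * x₀ + N) := by ring
      _ ≤ n := hlarge
  obtain ⟨M, hM⟩ := (Nat.modEq_iff_dvd' (by omega)).mp hmod
  have hMN : k * x₀ + N ≤ M := Nat.le_of_mul_le_mul_left (by omega) (by omega : 0 < h)
  obtain ⟨x, hx, y, hy, hxy⟩ := hX (M - k * x₀) (by omega)
  have hsum : n = (List.replicate j s ++ List.replicate ε b ++ [h * x + t, h * y + t] ++
      List.replicate k (h * x₀ + t)).sum := by
    simp only [List.sum_append, List.sum_replicate, smul_eq_mul, List.sum_cons, List.sum_nil]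
    have hMxy : M = k * x₀ + x + y := by omega
    rw [show n = j * s + ε * b + (k + 2) * t + h * M by omega, hMxy]
    ring
  rw [hsum]
  refine List.sum_mem_sumsetN ?_ fun a ha => ?_
  · simp only [List.length_append, List.length_replicate, List.length_cons, List.length_nil]
    omega
  simp only [List.mem_append, List.mem_replicate, List.mem_cons, List.not_mem_nil, or_false] at ha
  rcases ha with ((⟨-, rfl⟩ | ⟨-, rfl⟩) | (rfl | rfl)) | ⟨-, rfl⟩
  · exact Or.inl (Or.inl rfl)
  · exact Or.inr rfl
  · exact Or.inl (Or.inr ⟨x, hx, rfl⟩)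
  · exact Or.inl (Or.inr ⟨y, hy, rfl⟩)
  · exact Or.inl (Or.inr ⟨x₀, hx₀, rfl⟩)

theorem stmt17_general (h : ℕ) (hh : 2 ≤ h) (s t : ℕ)
    (hgcd : Int.gcd (h : ℤ) ((s : ℤ) - t) = 1)
    (Y₀ : Set ℕ) (hYgaps : InfiniteGapsN Y₀)
    (X₀ : Set ℕ) (hX : X₀ = Y₀ᶜ)
    (A : Set ℕ) (hA : A = {s} ∪ {m : ℕ | ∃ x ∈ X₀, m = h * x + t})
    (b : ℕ)
    (hbs : ¬ (b : ℤ) ≡ (s : ℤ) [ZMOD (h : ℤ)]) (hbt : ¬ (b : ℤ) ≡ (t : ℤ) [ZMOD (h : ℤ)]) :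
    (sumsetN h (A ∪ {b}))ᶜ.Finite := by
  subst hX hA
  obtain ⟨N, hN⟩ := hYgaps.exists_add_eq_of_le
  exact compl_sumsetN_finite_of_forall_modEq hN
    (exists_modEq_of_isCoprime (by omega) hgcd hbs hbt)

theorem stmt17 (h : ℕ) (hh : 2 ≤ h) (s t : ℕ)
    (hgcd : Int.gcd (h : ℤ) ((s : ℤ) - t) = 1)
    (Y₀ : Set ℕ) (hYinf : Y₀.Infinite) (hYgaps : InfiniteGapsN Y₀)
    (X₀ : Set ℕ) (hX : X₀ = Y₀ᶜ)
    (A : Set ℕ) (hA : A = {s} ∪ {m : ℕ | ∃ x ∈ X₀, m = h * x + t})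
    (b : ℕ) (hb : b ∉ A)
    (hbs : ¬ (b : ℤ) ≡ (s : ℤ) [ZMOD (h : ℤ)]) (hbt : ¬ (b : ℤ) ≡ (t : ℤ) [ZMOD (h : ℤ)]) :
    (sumsetN h (A ∪ {b}))ᶜ.Finite :=
  stmt17_general h hh s t hgcd Y₀ hYgaps X₀ hX A hA b hbs hbt
end

section
/- Let h ≥ 2, let s, t be nonnegative integers with gcd(h, s−t) = 1, let Y₀ ⊆ ℕ be infinite with infinite gaps, X₀ = ℕ \ Y₀, and A = {s} ∪ {hx + t : x ∈ X₀}. Then A is an asymptotic nonbasis of order h for ℕ that is not a subset of any maximal asymptotic nonbasis of order h for ℕ. -/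
open Filter

section Sumset

variable {A B : Set ℕ} {j k n : ℕ}

theorem mem_sumsetN_zero : n ∈ sumsetN 0 A ↔ n = 0 := by
  simp [sumsetN]

theorem mem_sumsetN_succ :
    n ∈ sumsetN (k + 1) A ↔ ∃ m ∈ sumsetN k A, ∃ a ∈ A, n = m + a := by
  constructor
  · rintro ⟨f, hf, rfl⟩
    exact ⟨_, ⟨fun i => f i.castSucc, fun i => hf _, rfl⟩, _, hf _, Fin.sum_univ_castSucc f⟩
  · rintro ⟨_, ⟨g, hg, rfl⟩, a, ha, rfl⟩
    refine ⟨Fin.snoc g a, fun i => ?_, by simp [Fin.sum_univ_castSucc]⟩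
    induction i using Fin.lastCases <;> simp [ha, hg]

theorem mem_sumsetN_one : n ∈ sumsetN 1 A ↔ n ∈ A := by
  simp [mem_sumsetN_succ, mem_sumsetN_zero]

theorem sumsetN_mono (hAB : A ⊆ B) : sumsetN k A ⊆ sumsetN k B := by
  rintro n ⟨f, hf, rfl⟩
  exact ⟨f, fun i => hAB (hf i), rfl⟩

theorem add_mem_sumsetN_add {a b : ℕ} (ha : a ∈ sumsetN j A) (hb : b ∈ sumsetN k A) :
    a + b ∈ sumsetN (j + k) A := by
  induction k generalizing b with
  | zero => simp_all [mem_sumsetN_zero]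
  | succ k ih =>
    obtain ⟨m, hm, c, hc, rfl⟩ := mem_sumsetN_succ.1 hb
    exact mem_sumsetN_succ.2 ⟨a + m, ih hm, c, hc, by ring⟩

theorem mul_mem_sumsetN {c : ℕ} (hc : c ∈ A) (k : ℕ) : k * c ∈ sumsetN k A := by
  induction k with
  | zero => simp [mem_sumsetN_zero]
  | succ k ih => exact mem_sumsetN_succ.2 ⟨_, ih, c, hc, by ring⟩

theorem exists_of_mem_sumsetN_union_singleton {c : ℕ} (hn : n ∈ sumsetN k (B ∪ {c})) :
    ∃ i j, i + j = k ∧ ∃ m ∈ sumsetN j B, n = i * c + m := by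
  induction k generalizing n with
  | zero => exact ⟨0, 0, rfl, 0, mem_sumsetN_zero.2 rfl, by simpa [mem_sumsetN_zero] using hn⟩
  | succ k ih =>
    obtain ⟨n', hn', a, ha, rfl⟩ := mem_sumsetN_succ.1 hn
    obtain ⟨i, j, hij, m, hm, rfl⟩ := ih hn'
    rcases ha with ha | rfl
    · exact ⟨i, j + 1, by omega, m + a, mem_sumsetN_succ.2 ⟨m, hm, a, ha, rfl⟩, by ring⟩
    · exact ⟨i + 1, j, by omega, m, hm, by ring⟩

end Sumset

def affineSet (h t : ℕ) (X : Set ℕ) : Set ℕ :=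
  {m | ∃ x ∈ X, m = h * x + t}

theorem mem_sumsetN_affineSet {h t k m : ℕ} {X : Set ℕ} :
    m ∈ sumsetN k (affineSet h t X) ↔ ∃ σ ∈ sumsetN k X, m = h * σ + k * t := by
  induction k generalizing m with
  | zero => simp [mem_sumsetN_zero]
  | succ k ih =>
    constructor
    · intro hn
      obtain ⟨m, hm, _, ⟨x, hx, rfl⟩, rfl⟩ := mem_sumsetN_succ.1 hn
      obtain ⟨σ, hσ, rfl⟩ := ih.1 hm
      exact ⟨σ + x, mem_sumsetN_succ.2 ⟨σ, hσ, x, hx, rfl⟩, by ring⟩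
    · rintro ⟨τ, hτ, rfl⟩
      obtain ⟨σ, hσ, x, hx, rfl⟩ := mem_sumsetN_succ.1 hτ
      exact mem_sumsetN_succ.2 ⟨_, ih.2 ⟨σ, hσ, rfl⟩, _, ⟨x, hx, rfl⟩, by ring⟩

theorem Fintype.exists_not_and_not {ι : Type*} [Fintype ι] (hι : 2 < Fintype.card ι)
    {P Q : ι → Prop} (hP : {i | P i}.Subsingleton) (hQ : {i | Q i}.Subsingleton) :
    ∃ i, ¬P i ∧ ¬Q i := by
  classical
  by_contra! hPQ
  obtain ⟨i, j, hij, hg⟩ :=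
    Fintype.exists_ne_map_eq_of_card_lt (fun i => decide (P i)) (by simpa using hι)
  by_cases hi : P i
  · exact hij (hP hi (by simpa [hi] using hg))
  · exact hij (hQ (hPQ i hi) (hPQ j (by simpa [hi] using hg)))

theorem InfiniteGapsN.exists_forall_add_lt {Y : Set ℕ} (hY : InfiniteGapsN Y) (C : ℕ) :
    ∃ K, ∀ a ∈ Y, ∀ b ∈ Y, K ≤ a → a < b → a + C < b := by
  obtain ⟨K, hK⟩ := ((hY (C + 1) (by positivity)).image Prod.fst).bddAbove
  refine ⟨K + 1, fun a ha b hb hKa hab => ?_⟩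
  by_contra! hba
  have : a ≤ K := hK ⟨(a, b), ⟨ha, hb, hab.ne, by rw [abs_le]; omega⟩, rfl⟩
  omega

theorem InfiniteGapsN.eventually_mem_sumsetN_two_compl {Y : Set ℕ} (hY : InfiniteGapsN Y) :
    ∀ᶠ n in atTop, n ∈ sumsetN 2 Yᶜ := by
  obtain ⟨K, hK⟩ := hY.exists_forall_add_lt 2
  refine eventually_atTop.2 ⟨2 * K + 2, fun n hn => ?_⟩
  -- at most one of K, K + 1, K + 2 and at most one of their complements to n lies in Y
  obtain ⟨i, hi, hni⟩ := Fintype.exists_not_and_not (ι := Fin 3) (by simp)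
    (P := fun i => K + i ∈ Y) (Q := fun i => n - (K + i) ∈ Y)
    (fun i hi j hj => by
      by_contra hij
      rcases Fin.lt_or_lt_of_ne hij with hlt | hlt
      · exact absurd (hK _ hi _ hj (by omega) (by omega)) (by omega)
      · exact absurd (hK _ hj _ hi (by omega) (by omega)) (by omega))
    (fun i hi j hj => by
      by_contra hij
      rcases Fin.lt_or_lt_of_ne hij with hlt | hlt
      · exact absurd (hK _ hj _ hi (by omega) (by omega)) (by omega)
      · exact absurd (hK _ hi _ hj (by omega) (by omega)) (by omega))
  have := add_mem_sumsetN_add (A := Yᶜ) (mem_sumsetN_one.2 hi) (mem_sumsetN_one.2 hni)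
  rwa [Nat.add_sub_cancel' (by omega)] at this

theorem eventually_mem_sumsetN_of_two {X : Set ℕ} (hX : ∀ᶠ n in atTop, n ∈ sumsetN 2 X)
    {k : ℕ} (hk : 2 ≤ k) : ∀ᶠ n in atTop, n ∈ sumsetN k X := by
  obtain ⟨n, hn⟩ := hX.exists
  obtain ⟨-, -, x, hx, -⟩ := mem_sumsetN_succ.1 hn
  induction k, hk using Nat.le_induction with
  | base => exact hX
  | succ k _ ih =>
    filter_upwards [(tendsto_sub_atTop_nat x).eventually ih, eventually_ge_atTop x] with n hn hxn
    exact mem_sumsetN_succ.2 ⟨n - x, hn, x, hx, by omega⟩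

def hole (h s t y : ℕ) : ℕ := (h - 1) * s + t + h * y

theorem hole_injective {h : ℕ} (hh : 0 < h) (s t : ℕ) : Function.Injective (hole h s t) := by
  intro y y' hyy'
  simp only [hole, add_right_inj] at hyy'
  exact Nat.eq_of_mul_eq_mul_left hh hyy'

theorem hole_add {h s t y : ℕ} (d : ℕ) : hole h s t (y + d) = hole h s t y + h * d := by
  simp only [hole]; ring

theorem eq_of_add_eq_hole {h s t j k σ y : ℕ} (hh : 2 ≤ h) (hcop : IsCoprime (h : ℤ) (s - t))
    (hjk : j + k = h) (heq : j * s + (h * σ + k * t) = hole h s t y) : j = h - 1 ∧ σ = y := by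
  have hz : ((j : ℤ) - (h - 1)) * (s - t) = h * (y - σ) := by
    have := congrArg (Nat.cast : ℕ → ℤ) heq
    have hk : (k : ℤ) = h - j := by omega
    push_cast [hole, Nat.cast_sub (by omega : 1 ≤ h)] at this
    rw [hk] at this
    linear_combination this
  have hj : (j : ℤ) - (h - 1) = 0 :=
    Int.eq_zero_of_abs_lt_dvd (hcop.dvd_of_dvd_mul_right ⟨_, hz⟩) (by rw [abs_lt]; omega)
  rw [hj, zero_mul, eq_comm, mul_eq_zero] at hz
  omega

theorem exists_eq_add_mul {h s t : ℕ} (hh : 0 < h) (hcop : IsCoprime (h : ℤ) (s - t))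
    {Q n : ℕ} (hn : h * (s + t + Q) ≤ n) :
    ∃ j k q, j + k = h ∧ 0 < k ∧ Q ≤ q ∧ n = j * s + (h * q + k * t) := by
  obtain ⟨a, b, hab⟩ := hcop
  have : NeZero h := ⟨hh.ne'⟩
  set j := ((n : ZMod h) * b).val
  have hj : j < h := ZMod.val_lt _
  obtain ⟨c, hc⟩ : (h : ℤ) ∣ n - j * s - (h - j) * t := by
    rw [← ZMod.intCast_zmod_eq_zero_iff_dvd]
    have hab' := congrArg (Int.cast : ℤ → ZMod h) hab
    push_cast [ZMod.natCast_self] at hab' ⊢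
    rw [ZMod.natCast_zmod_val]
    linear_combination (-(n : ZMod h)) * hab'
  have hcQ : (Q : ℤ) ≤ c := by
    have : (j : ℤ) * s + (h - j) * t ≤ h * (s + t) := by nlinarith
    have : (h : ℤ) * (s + t + Q) ≤ n := by exact_mod_cast hn
    nlinarith
  refine ⟨j, h - j, c.toNat, by omega, by omega, by omega, ?_⟩
  zify [hj.le]
  rw [Int.toNat_of_nonneg (by omega)]
  linear_combination hc

section Nonbasis

variable {h s t : ℕ} {X M : Set ℕ}

theorem add_mem_sumsetN_of_affineSet_subset (hT : affineSet h t X ⊆ M) {j k m q : ℕ}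
    (hm : m ∈ sumsetN j M) (hq : q ∈ sumsetN k X) : m + (h * q + k * t) ∈ sumsetN (j + k) M :=
  add_mem_sumsetN_add hm (sumsetN_mono hT (mem_sumsetN_affineSet.2 ⟨q, hq, rfl⟩))

theorem hole_notMem_sumsetN (hh : 2 ≤ h) (hcop : IsCoprime (h : ℤ) (s - t)) {y : ℕ}
    (hy : y ∉ X) : hole h s t y ∉ sumsetN h ({s} ∪ affineSet h t X) := by
  intro hmem
  rw [Set.union_comm] at hmem
  obtain ⟨j, k, hjk, m, hm, hym⟩ := exists_of_mem_sumsetN_union_singleton hmem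
  obtain ⟨σ, hσ, rfl⟩ := mem_sumsetN_affineSet.1 hm
  obtain ⟨rfl, rfl⟩ := eq_of_add_eq_hole hh hcop hjk hym.symm
  obtain rfl : k = 1 := by omega
  exact hy (mem_sumsetN_one.1 hσ)

theorem eventually_mem_sumsetN_or_eq_hole (hh : 0 < h) (hcop : IsCoprime (h : ℤ) (s - t))
    (hX : ∀ k, 2 ≤ k → ∀ᶠ n in atTop, n ∈ sumsetN k X) :
    ∀ᶠ n in atTop, n ∈ sumsetN h ({s} ∪ affineSet h t X) ∨ ∃ y ∉ X, n = hole h s t y := by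
  obtain ⟨N, hN⟩ := eventually_atTop.1 <|
    (Set.finite_Icc 2 h).eventually_all.2 fun k hk => hX k hk.1
  refine eventually_atTop.2 ⟨h * (s + t + N), fun n hn => ?_⟩
  obtain ⟨j, k, q, hjk, hk, hNq, rfl⟩ := exists_eq_add_mul hh hcop hn
  by_cases hq : q ∈ sumsetN k X
  · have := add_mem_sumsetN_of_affineSet_subset Set.subset_union_right
      (mul_mem_sumsetN (A := {s} ∪ affineSet h t X) (Or.inl rfl) j) hq
    exact Or.inl (hjk ▸ this)
  · obtain rfl : k = 1 := by
      by_contra hk1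
      exact hq (hN q hNq k ⟨by omega, by omega⟩)
    refine Or.inr ⟨q, fun hqX => hq (mem_sumsetN_one.2 hqX), ?_⟩
    rw [hole, show h - 1 = j by omega]
    ring

theorem infinite_setOf_hole_notMem_sumsetN (hh : 0 < h) (hcop : IsCoprime (h : ℤ) (s - t))
    (hX : ∀ k, 2 ≤ k → ∀ᶠ n in atTop, n ∈ sumsetN k X) (hAM : {s} ∪ affineSet h t X ⊆ M)
    (hM : (sumsetN h M)ᶜ.Infinite) : {y | y ∉ X ∧ hole h s t y ∉ sumsetN h M}.Infinite := by
  intro hfin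
  have hcov := eventually_mem_sumsetN_or_eq_hole (t := t) hh hcop hX
  rw [← Nat.cofinite_eq_atTop, eventually_cofinite] at hcov
  refine hM ((hcov.union (hfin.image (hole h s t))).subset fun n hn => ?_)
  by_cases hc : n ∈ sumsetN h ({s} ∪ affineSet h t X) ∨ ∃ y ∉ X, n = hole h s t y
  · rcases hc with hA | ⟨y, hyX, rfl⟩
    · exact absurd (sumsetN_mono hAM hA) hn
    · exact Or.inr ⟨y, ⟨hyX, hn⟩, rfl⟩
  · exact Or.inl hc

theorem hole_mem_sumsetN_of_shift (hT : affineSet h t X ⊆ M) {i j m y y' ys : ℕ}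
    (hij : i + j = h) (hm : m ∈ sumsetN j M) (hym : hole h s t y = i * (h * ys + t) + m)
    (hyy' : y ≤ y') (hq : i * ys + (y' - y) ∈ sumsetN i X) : hole h s t y' ∈ sumsetN h M := by
  obtain ⟨d, rfl⟩ := Nat.exists_eq_add_of_le hyy'
  rw [Nat.add_sub_cancel_left] at hq
  have := add_mem_sumsetN_of_affineSet_subset hT hm hq
  rw [add_comm j, hij] at this
  convert this using 1
  rw [hole_add, hym]
  ring

theorem hole_notMem_sumsetN_union_singleton (hgaps : InfiniteGapsN Xᶜ)
    (hX : ∀ k, 2 ≤ k → ∀ᶠ n in atTop, n ∈ sumsetN k X) (hT : affineSet h t X ⊆ M) {Y : Set ℕ}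
    (hY : ∀ y ∈ Y, y ∉ X ∧ hole h s t y ∉ sumsetN h M) (hYinf : Y.Infinite) {y ys : ℕ}
    (hy : y ∈ Y) (hne : y ≠ ys) : hole h s t y ∉ sumsetN h (M ∪ {h * ys + t}) := by
  intro hmem
  obtain ⟨i, j, hij, m, hm, hym⟩ := exists_of_mem_sumsetN_union_singleton hmem
  suffices ∃ y' ∈ Y, y ≤ y' ∧ i * ys + (y' - y) ∈ sumsetN i X by
    obtain ⟨y', hy', hyy', hq⟩ := this
    exact (hY y' hy').2 (hole_mem_sumsetN_of_shift hT hij hm hym hyy' hq)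
  rcases (show i = 0 ∨ i = 1 ∨ 2 ≤ i by omega) with rfl | rfl | hi
  · exact ⟨y, hy, le_rfl, mem_sumsetN_zero.2 (by simp)⟩
  · -- y' and ys + (y' - y) are distinct points of Xᶜ at distance |ys - y|, beyond any bound
    obtain ⟨K, hK⟩ := hgaps.exists_forall_add_lt (ys + y)
    obtain ⟨y', hy', hKy'⟩ := hYinf.exists_gt (K + y)
    refine ⟨y', hy', by omega, mem_sumsetN_one.2 ?_⟩
    by_contra hx
    have hy'X := (hY y' hy').1
    rcases Nat.lt_or_gt_of_ne hne with hlt | hlt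
    · exact absurd (hK _ hy'X _ hx (by omega) (by omega)) (by omega)
    · exact absurd (hK _ hx _ hy'X (by omega) (by omega)) (by omega)
  · obtain ⟨N, hN⟩ := eventually_atTop.1 (hX i hi)
    obtain ⟨y', hy', hNy'⟩ := hYinf.exists_gt (y + N)
    exact ⟨y', hy', by omega, hN _ (by omega)⟩

theorem exists_notMem_infinite_compl_sumsetN_union (hh : 0 < h)
    (hcop : IsCoprime (h : ℤ) (s - t)) (hgaps : InfiniteGapsN Xᶜ)
    (hAM : {s} ∪ affineSet h t X ⊆ M) (hM : (sumsetN h M)ᶜ.Infinite) :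
    ∃ b ∉ M, (sumsetN h (M ∪ {b}))ᶜ.Infinite := by
  have hX : ∀ k, 2 ≤ k → ∀ᶠ n in atTop, n ∈ sumsetN k X := fun k hk => by
    simpa using eventually_mem_sumsetN_of_two hgaps.eventually_mem_sumsetN_two_compl hk
  have hY := infinite_setOf_hole_notMem_sumsetN hh hcop hX hAM hM
  obtain ⟨ys, hysX, hys⟩ := hY.nonempty
  have hT : affineSet h t X ⊆ M := Set.subset_union_right.trans hAM
  refine ⟨h * ys + t, fun hb => hys ?_, fun hfin => ?_⟩
  · have := add_mem_sumsetN_add (mul_mem_sumsetN (hAM (Set.mem_union_left _ rfl)) (h - 1))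
      (mem_sumsetN_one.2 hb)
    rw [Nat.sub_add_cancel hh] at this
    convert this using 1
    simp only [hole]
    ring
  · refine ((hY.sdiff (Set.finite_singleton ys)).image (hole_injective hh s t).injOn).mono ?_ hfin
    rintro _ ⟨y, ⟨hy, hne⟩, rfl⟩
    exact hole_notMem_sumsetN_union_singleton hgaps hX hT (fun y hy => hy) hY hy hne

end Nonbasis

theorem stmt18 (h : ℕ) (hh : 2 ≤ h) (s t : ℕ)
    (hgcd : Int.gcd (h : ℤ) ((s : ℤ) - t) = 1)
    (Y₀ : Set ℕ) (hYinf : Y₀.Infinite) (hYgaps : InfiniteGapsN Y₀)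
    (X₀ : Set ℕ) (hX : X₀ = Y₀ᶜ)
    (A : Set ℕ) (hA : A = {s} ∪ {m : ℕ | ∃ x ∈ X₀, m = h * x + t}) :
    (sumsetN h A)ᶜ.Infinite ∧
    ¬ ∃ M : Set ℕ, A ⊆ M ∧ (sumsetN h M)ᶜ.Infinite ∧
        ∀ b ∉ M, (sumsetN h (M ∪ {b}))ᶜ.Finite := by
  have hcop : IsCoprime (h : ℤ) (s - t) := Int.isCoprime_iff_gcd_eq_one.2 hgcd
  subst hX hA
  constructor
  · refine (hYinf.image (hole_injective (by omega : 0 < h) s t).injOn).mono ?_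
    rintro _ ⟨y, hy, rfl⟩
    exact hole_notMem_sumsetN hh hcop (Set.notMem_compl_iff.2 hy)
  · rintro ⟨M, hAM, hM, hmax⟩
    obtain ⟨b, hb, hinf⟩ := exists_notMem_infinite_compl_sumsetN_union (by omega) hcop
      (by rwa [compl_compl]) hAM hM
    exact hinf (hmax b hb)
end
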